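/- arXiv:1309.4029 — 7 statements merged into one kernel-verified Lean document; each statement's English description precedes it below -/
import Mathlib

section
/- Let X_1,...,X_n be a random sample drawn without replacement from a finite population (x_1,...,x_N) of real numbers, and Y_1,...,Y_n a random sample drawn with replacement (i.i.d. uniform) from the same population. If f: ℝ → ℝ is continuous and convex, then E[f(X_1 + ... + X_n)] ≤ E[f(Y_1 + ... + Y_n)]. -/
open MeasureTheory Finset Real
open scoped ENNReal

/-- The first `N` coordinates of the process `X` are a sample drawn without replacement
from the population `x : Fin N → ℝ`, i.e. the law of `(X 0, …, X (N-1))` is the uniform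
distribution over the orderings of the population. -/
def samplesWithoutReplacement {Ω : Type*} [MeasurableSpace Ω] (P : Measure Ω)
    (N : ℕ) (x : Fin N → ℝ) (X : ℕ → Ω → ℝ) : Prop :=
  Measure.map (fun ω (i : Fin N) => X i ω) P =
    (Nat.factorial N : ℝ≥0∞)⁻¹ • ∑ e : Equiv.Perm (Fin N), Measure.dirac (fun i => x (e i))

/-- The first `n` coordinates of `Y` are an i.i.d. uniform sample (with replacement)
from the population `x : Fin N → ℝ`. -/
def samplesWithReplacement {Ω : Type*} [MeasurableSpace Ω] (P : Measure Ω)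
    (N n : ℕ) (x : Fin N → ℝ) (Y : ℕ → Ω → ℝ) : Prop :=
  Measure.map (fun ω (i : Fin n) => Y i ω) P =
    ((N : ℝ≥0∞) ^ n)⁻¹ • ∑ g : Fin n → Fin N, Measure.dirac (fun i => x (g i))

/-!
For `g : ι → α` put `permSum f x g = ∑ σ, f (∑ i, x (σ (g i)))`, the sum over all relabellings of
the population. The mean of `f` of the sum without replacement is `permSum f x h / N!` for any
injective `h`, while averaging `permSum f x g` over all `g` gives `N!` times the mean with
replacement. So it suffices that `permSum` is minimal at injective maps. It takes the same value
at all of them, and if `g` is not injective, redirecting one index `i₀` to an unused value `j'`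
does not increase it: with `c` the size of the fibre of `g i₀`, the new sums are the convex
combination `(1 - 1/c) • S + (1/c) • S'` of the sums `S` for `g` and `S'` for `swap (g i₀) j' ∘ g`,
and `permSum` does not see the swap.
-/

open Function Equiv

section SumComp

variable {ι α E : Type*} [Fintype ι] [AddCommGroup E] (y : α → E) (g : ι → α)

lemma sum_swap_comp_of_notMem [DecidableEq α] [Module ℝ E] {j j' : α}
    (hj' : j' ∉ Set.range g) :
    ∑ i, y (swap j j' (g i)) = ∑ i, y (g i) + (#{i | g i = j} : ℝ) • (y j' - y j) := by
  rw [← sub_eq_iff_eq_add', ← sum_sub_distrib, ← sum_filter_add_sum_filter_not _ (g · = j)]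
  have hfixed : ∀ i ∈ ({i | ¬g i = j} : Finset ι), y (swap j j' (g i)) - y (g i) = 0 := by
    intro i hi
    rw [swap_apply_of_ne_of_ne (mem_filter.1 hi).2 fun h => hj' ⟨i, h⟩, sub_self]
  rw [sum_eq_zero hfixed, add_zero,
    sum_congr rfl fun i hi => by rw [(mem_filter.1 hi).2, swap_apply_left],
    sum_const, Nat.cast_smul_eq_nsmul]

lemma sum_update_comp [DecidableEq ι] (i₀ : ι) (j' : α) :
    ∑ i, y (update g i₀ j' i) = ∑ i, y (g i) + (y j' - y (g i₀)) := by
  have h := sum_update_of_mem (mem_univ i₀) (y ∘ g) (y j')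
  simp only [← comp_update, comp_apply] at h
  rw [h, ← add_sum_erase _ _ (mem_univ i₀), sdiff_singleton_eq_erase]
  abel

end SumComp

lemma image_update_of_eq {ι α : Type*} [Fintype ι] [DecidableEq ι] [DecidableEq α]
    {g : ι → α} {i₁ i₂ : ι} (h12 : i₁ ≠ i₂) (hg : g i₁ = g i₂) (j' : α) :
    univ.image (update g i₁ j') = insert j' (univ.image g) := by
  ext k
  simp only [mem_image, mem_univ, true_and, mem_insert]
  constructor
  · rintro ⟨i, rfl⟩
    by_cases hi : i = i₁
    · subst hi; simp
    · exact Or.inr ⟨i, (update_of_ne hi _ _).symm⟩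
  · rintro (rfl | ⟨i, rfl⟩)
    · exact ⟨i₁, update_self _ _ _⟩
    · by_cases hi : i = i₁
      · subst hi; exact ⟨i₂, by rw [update_of_ne h12.symm, hg]⟩
      · exact ⟨i, update_of_ne hi _ _⟩

section PermSum

variable {ι α E : Type*} [Fintype ι] [Fintype α] [DecidableEq α]

noncomputable def permSum [AddCommMonoid E] (f : E → ℝ) (x : α → E) (g : ι → α) : ℝ :=
  ∑ σ : Perm α, f (∑ i, x (σ (g i)))

section AddCommMonoid

variable [AddCommMonoid E] {f : E → ℝ} {x : α → E}

lemma permSum_perm_comp (τ : Perm α) (g : ι → α) : permSum f x (τ ∘ g) = permSum f x g :=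
  Equiv.sum_comp (Equiv.mulRight τ) fun σ => f (∑ i, x (σ (g i)))

lemma permSum_eq_of_injective {g h : ι → α} (hg : Injective g) (hh : Injective h) :
    permSum f x h = permSum f x g := by
  obtain ⟨τ, hτ⟩ := Perm.exists_extending_pair g h hg hh
  rw [← permSum_perm_comp τ g]
  exact congrArg _ (funext fun i => (hτ i).symm)

end AddCommMonoid

variable [AddCommGroup E] [Module ℝ E] {f : E → ℝ} {x : α → E}

lemma permSum_update_le [DecidableEq ι] (hf : ConvexOn ℝ Set.univ f) (g : ι → α) (i₀ : ι)
    {j' : α} (hj' : j' ∉ Set.range g) : permSum f x (update g i₀ j') ≤ permSum f x g := by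
  set j := g i₀
  set c : ℝ := ((univ.filter (g · = j)).card : ℝ)
  have hc : 1 ≤ c := Nat.one_le_cast.2 (card_pos.2 ⟨i₀, by simp [j]⟩)
  have hcomb : ∀ σ : Perm α, ∑ i, x (σ (update g i₀ j' i)) =
      (1 - c⁻¹) • ∑ i, x (σ (g i)) + c⁻¹ • ∑ i, x (σ (swap j j' (g i))) := by
    intro σ
    have hupdate := sum_update_comp (x ∘ σ) g i₀ j'
    have hswap := sum_swap_comp_of_notMem (x ∘ σ) g (j := j) hj'
    simp only [comp_apply] at hupdate hswap
    rw [hupdate, hswap]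
    have : c ≠ 0 := by positivity
    match_scalars <;> field_simp <;> ring
  calc permSum f x (update g i₀ j')
      ≤ ∑ σ : Perm α, ((1 - c⁻¹) * f (∑ i, x (σ (g i))) +
          c⁻¹ * f (∑ i, x (σ (swap j j' (g i))))) := by
        refine sum_le_sum fun σ _ => ?_
        rw [hcomb σ]
        exact hf.2 (Set.mem_univ _) (Set.mem_univ _) (by linarith [inv_le_one_of_one_le₀ hc])
          (by positivity) (by ring)
    _ = (1 - c⁻¹) * permSum f x g + c⁻¹ * permSum f x (swap j j' ∘ g) := by
        rw [sum_add_distrib, ← mul_sum, ← mul_sum]; rfl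
    _ = permSum f x g := by rw [permSum_perm_comp]; ring

lemma permSum_le_of_injective (hf : ConvexOn ℝ Set.univ f) {h : ι → α} (hh : Injective h)
    (g : ι → α) : permSum f x h ≤ permSum f x g := by
  classical
  by_cases hg : Injective g
  · exact (permSum_eq_of_injective hg hh).le
  obtain ⟨i₁, i₂, hg12, h12⟩ : ∃ i₁ i₂, g i₁ = g i₂ ∧ i₁ ≠ i₂ := by
    simpa [Injective] using hg
  have hlt : #(univ.image g) < Fintype.card ι :=
    card_image_le.lt_of_ne fun heq =>
      hg (Set.injOn_univ.1 (by simpa using card_image_iff.1 heq))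
  obtain ⟨j', -, hj'⟩ := exists_mem_notMem_of_card_lt_card
    (hlt.trans_le (Fintype.card_le_of_injective h hh))
  have himage := image_update_of_eq h12 hg12 j'
  exact (permSum_le_of_injective hf hh (update g i₁ j')).trans
    (permSum_update_le hf g i₁ (by simpa using hj'))
termination_by Fintype.card ι - #(univ.image g)
decreasing_by rw [himage, card_insert_of_notMem hj']; omega

theorem inv_card_mul_permSum_le [DecidableEq ι] (hf : ConvexOn ℝ Set.univ f) {h : ι → α}
    (hh : Injective h) :
    (Fintype.card (Perm α) : ℝ)⁻¹ * permSum f x h ≤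
      (Fintype.card (ι → α) : ℝ)⁻¹ * ∑ g : ι → α, f (∑ i, x (g i)) := by
  have : Nonempty (ι → α) := ⟨h⟩
  have hsum : ∑ g : ι → α, permSum f x g =
      Fintype.card (Perm α) * ∑ g : ι → α, f (∑ i, x (g i)) := by
    unfold permSum
    rw [sum_comm, ← nsmul_eq_mul, ← card_univ, ← sum_const]
    exact sum_congr rfl fun σ _ =>
      Fintype.sum_bijective (σ ∘ ·) σ.bijective.comp_left _ _ fun g => rfl
  have hle : Fintype.card (ι → α) * permSum f x h ≤ ∑ g : ι → α, permSum f x g := by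
    have := sum_le_sum fun g (_ : g ∈ univ) => permSum_le_of_injective (x := x) hf hh g
    rwa [sum_const, card_univ, nsmul_eq_mul] at this
  have hperm : (0 : ℝ) < Fintype.card (Perm α) := by exact_mod_cast Fintype.card_pos
  have hfun : (0 : ℝ) < Fintype.card (ι → α) := by exact_mod_cast Fintype.card_pos
  rw [inv_mul_le_iff₀ hperm, mul_left_comm, le_inv_mul_iff₀ hfun, ← hsum]
  exact hle

end PermSum

lemma integral_comp_eq_of_map_eq_smul_sum_dirac {Ω E κ : Type*} [MeasurableSpace Ω]
    [MeasurableSpace E] [MeasurableSingletonClass E] [Fintype κ] {P : Measure Ω} {Z : Ω → E}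
    (hZ : Measurable Z) {c : ℝ≥0∞} {p : κ → E} (hmap : P.map Z = c • ∑ k, Measure.dirac (p k))
    {F : E → ℝ} (hF : Measurable F) :
    ∫ ω, F (Z ω) ∂P = c.toReal * ∑ k, F (p k) := by
  rw [← integral_map hZ.aemeasurable hF.aestronglyMeasurable, hmap, integral_smul_measure,
    integral_finsetSum_measure fun k _ => integrable_dirac enorm_lt_top]
  simp [integral_dirac]

theorem hoeffding_reduction_general
    {Ω : Type*} [MeasurableSpace Ω] (P : Measure Ω)
    (N n : ℕ) (hn : n ≤ N) (x : Fin N → ℝ)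
    (X Y : ℕ → Ω → ℝ) (hXm : ∀ i, Measurable (X i)) (hYm : ∀ i, Measurable (Y i))
    (hX : samplesWithoutReplacement P N x X)
    (hY : samplesWithReplacement P N n x Y)
    (f : ℝ → ℝ) (hf : Continuous f) (hconv : ConvexOn ℝ Set.univ f) :
    ∫ ω, f (∑ i ∈ Finset.range n, X i ω) ∂P ≤
      ∫ ω, f (∑ i ∈ Finset.range n, Y i ω) ∂P := by
  have hXn (ω : Ω) : ∑ i ∈ range n, X i ω = ∑ i : Fin n, X (Fin.castLE hn i) ω :=
    (Fin.sum_univ_eq_sum_range (X · ω) n).symm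
  have hYn (ω : Ω) : ∑ i ∈ range n, Y i ω = ∑ i : Fin n, Y i ω :=
    (Fin.sum_univ_eq_sum_range (Y · ω) n).symm
  have hL := integral_comp_eq_of_map_eq_smul_sum_dirac (Z := fun ω (i : Fin N) => X i ω)
    (measurable_pi_lambda _ fun i => hXm i) hX
    (F := fun v => f (∑ i : Fin n, v (Fin.castLE hn i))) (by fun_prop)
  have hR := integral_comp_eq_of_map_eq_smul_sum_dirac (Z := fun ω (i : Fin n) => Y i ω)
    (measurable_pi_lambda _ fun i => hYm i) hY (F := fun v => f (∑ i, v i)) (by fun_prop)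
  simp only at hL hR
  simp_rw [hXn, hYn, hL, hR]
  simpa [ENNReal.toReal_inv, Fintype.card_perm, permSum] using
    inv_card_mul_permSum_le (x := x) hconv (Fin.castLE_injective hn)

/-- Hoeffding's reduction lemma. -/
theorem hoeffding_reduction
    {Ω : Type*} [MeasurableSpace Ω] (P : Measure Ω) [IsProbabilityMeasure P]
    (N n : ℕ) (hN : 1 ≤ N) (hn : n ≤ N) (x : Fin N → ℝ)
    (X Y : ℕ → Ω → ℝ) (hXm : ∀ i, Measurable (X i)) (hYm : ∀ i, Measurable (Y i))
    (hX : samplesWithoutReplacement P N x X)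
    (hY : samplesWithReplacement P N n x Y)
    (f : ℝ → ℝ) (hf : Continuous f) (hconv : ConvexOn ℝ Set.univ f) :
    ∫ ω, f (∑ i ∈ Finset.range n, X i ω) ∂P ≤
      ∫ ω, f (∑ i ∈ Finset.range n, Y i ω) ∂P :=
  hoeffding_reduction_general P N n hn x X Y hXm hYm hX hY f hf hconv
end

section
/- Let X_1,...,X_n be sampled without replacement from a finite population (x_1,...,x_N) with mean μ = (1/N)∑x_i, minimum a and maximum b. Then for all ε > 0, P((1/n)∑_{i=1}^n X_i − μ ≥ ε) ≤ exp(−2nε²/(b−a)²). -/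
open MeasureTheory Finset Real
open scoped ENNReal

open Equiv ProbabilityTheory
open scoped Nat NNReal

section PermProd

variable {α : Type*} [DecidableEq α] {y : α → ℝ} {s : Finset α} {i₀ : α}

lemma sub_mul_sub_prod_swap_nonneg (hy : 0 ≤ y) (hi₀ : i₀ ∉ s) (e : Perm α) (i : α) :
    0 ≤ (y i - y (e i₀)) * (∏ t ∈ s, y (e t) - ∏ t ∈ s, y (swap (e i₀) i (e t))) := by
  by_cases hi : ∃ t₀ ∈ s, e t₀ = i
  · obtain ⟨t₀, ht₀, rfl⟩ := hi
    have hfix : ∀ t ∈ s.erase t₀, swap (e i₀) (e t₀) (e t) = e t := fun t ht =>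
      swap_apply_of_ne_of_ne (e.injective.ne (ne_of_mem_of_not_mem (mem_of_mem_erase ht) hi₀))
        (e.injective.ne (ne_of_mem_erase ht))
    rw [← mul_prod_erase s (fun t => y (e t)) ht₀,
      ← mul_prod_erase s (fun t => y (swap (e i₀) (e t₀) (e t))) ht₀, swap_apply_right,
      prod_congr rfl fun t ht => congrArg y (hfix t ht), ← sub_mul, ← mul_assoc, ← sq]
    exact mul_nonneg (sq_nonneg _) (prod_nonneg fun t _ => hy _)
  · push Not at hi
    rw [prod_congr rfl fun t ht => congrArg y (swap_apply_of_ne_of_ne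
      (e.injective.ne (ne_of_mem_of_not_mem ht hi₀)) (hi t ht)), sub_self, mul_zero]

variable [Fintype α]

theorem card_mul_sum_perm_prod_insert_le (hy : 0 ≤ y) (hi₀ : i₀ ∉ s) :
    Fintype.card α * ∑ e : Perm α, ∏ t ∈ insert i₀ s, y (e t) ≤
      (∑ i, y i) * ∑ e : Perm α, ∏ t ∈ s, y (e t) := by
  let f : Perm α × α → ℝ := fun p => (y p.2 - y (p.1 i₀)) * ∏ t ∈ s, y (p.1 t)
  let g : Perm α × α → Perm α × α := fun p => (swap (p.1 i₀) p.2 * p.1, p.1 i₀)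
  have hg : Function.Involutive g := fun p => by simp [g, swap_comm, ← mul_assoc]
  have hf : 0 ≤ ∑ p, f p := by
    have hsym : ∑ p, f (g p) = ∑ p, f p := by
      simpa using Equiv.sum_comp (hg.toPerm g) f
    have : 0 ≤ ∑ p, (f p + f (g p)) := sum_nonneg fun p _ => by
      have := sub_mul_sub_prod_swap_nonneg hy hi₀ p.1 p.2
      simp only [f, g, Perm.mul_apply, swap_apply_left]
      linarith
    rw [sum_add_distrib, hsym] at this
    linarith
  have hsum : ∑ p, f p = (∑ i, y i) * ∑ e : Perm α, ∏ t ∈ s, y (e t) -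
      Fintype.card α * ∑ e : Perm α, ∏ t ∈ insert i₀ s, y (e t) := by
    simp only [f, Fintype.sum_prod_type, sub_mul, sum_sub_distrib, prod_insert hi₀, ← sum_mul,
      sum_const, card_univ, nsmul_eq_mul, mul_sum]
    simp only [mul_assoc]
  linarith

theorem sum_perm_prod_le (hy : 0 ≤ y) (s : Finset α) :
    ∑ e : Perm α, ∏ t ∈ s, y (e t) ≤
      (Fintype.card α)! * ((∑ i, y i) / Fintype.card α) ^ #s := by
  set m := (∑ i, y i) / Fintype.card α
  induction s using Finset.induction_on with
  | empty => simp [Fintype.card_perm]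
  | insert i₀ s hi₀ ih =>
    have hN : (0 : ℝ) < Fintype.card α := Nat.cast_pos.2 (Fintype.card_pos_iff.2 ⟨i₀⟩)
    have hm : 0 ≤ m := div_nonneg (sum_nonneg fun i _ => hy i) hN.le
    calc ∑ e : Perm α, ∏ t ∈ insert i₀ s, y (e t)
        ≤ m * ∑ e : Perm α, ∏ t ∈ s, y (e t) := by
          rw [div_mul_eq_mul_div, le_div_iff₀ hN]
          linarith [card_mul_sum_perm_prod_insert_le hy hi₀]
      _ ≤ m * ((Fintype.card α)! * m ^ #s) := by gcongr
      _ = (Fintype.card α)! * m ^ #(insert i₀ s) := by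
          rw [card_insert_of_notMem hi₀]
          ring

end PermProd

lemma mean_exp_mul_sub_mean_le {ι : Type*} [Fintype ι] [Nonempty ι] {f : ι → ℝ} {a b : ℝ}
    (hf : ∀ i, f i ∈ Set.Icc a b) (t : ℝ) :
    (∑ i, exp (t * (f i - (∑ j, f j) / Fintype.card ι))) / Fintype.card ι ≤
      exp ((b - a) ^ 2 / 8 * t ^ 2) := by
  let _ : MeasurableSpace ι := ⊤
  have : DiscreteMeasurableSpace ι := ⟨fun _ => trivial⟩
  have hmean (g : ι → ℝ) :
      ∫ i, g i ∂uniformOn Set.univ = (∑ i, g i) / Fintype.card ι := by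
    rw [integral_fintype .of_finite, sum_div]
    simp [measureReal_def, uniformOn_univ, div_eq_inv_mul]
  have h := (hasSubgaussianMGF_of_mem_Icc (μ := uniformOn Set.univ)
    (measurable_of_finite f).aemeasurable (ae_of_all _ hf)).mgf_le t
  rw [mgf, hmean, hmean] at h
  convert h using 2
  push_cast
  rw [Real.norm_eq_abs, div_pow, sq_abs]
  ring

namespace samplesWithoutReplacement

variable {Ω : Type*} [MeasurableSpace Ω] {P : Measure Ω} {N : ℕ} {x : Fin N → ℝ}
  {X : ℕ → Ω → ℝ}

lemma integrable_map (hX : samplesWithoutReplacement P N x X) (g : (Fin N → ℝ) → ℝ) :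
    Integrable g (P.map fun ω (i : Fin N) => X i ω) := by
  rw [hX]
  exact (integrable_finsetSum_measure.2 fun e _ => integrable_dirac (by simp)).smul_measure
    (by simp [Nat.factorial_ne_zero])

lemma integrable_comp (hX : samplesWithoutReplacement P N x X) (hXm : ∀ i, Measurable (X i))
    (g : (Fin N → ℝ) → ℝ) : Integrable (fun ω => g (fun i => X i ω)) P :=
  (hX.integrable_map g).comp_measurable (measurable_pi_lambda _ fun i => hXm i)

lemma integral_comp (hX : samplesWithoutReplacement P N x X) (hXm : ∀ i, Measurable (X i))
    (g : (Fin N → ℝ) → ℝ) :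
    ∫ ω, g (fun i => X i ω) ∂P =
      (N ! : ℝ)⁻¹ * ∑ e : Perm (Fin N), g (fun i => x (e i)) := by
  have hV : Measurable fun ω (i : Fin N) => X i ω := measurable_pi_lambda _ fun i => hXm i
  rw [← integral_map hV.aemeasurable (hX.integrable_map g).aestronglyMeasurable, hX,
    integral_smul_measure, integral_finsetSum_measure fun e _ => integrable_dirac (by simp)]
  simp [mul_sum]

theorem hasSubgaussianMGF_sum_sub_mean [NeZero N] (hX : samplesWithoutReplacement P N x X)
    (hXm : ∀ i, Measurable (X i)) {a b : ℝ} (hx : ∀ i, x i ∈ Set.Icc a b)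
    (s : Finset (Fin N)) :
    HasSubgaussianMGF (fun ω => ∑ k ∈ s, (X k ω - (∑ i, x i) / N))
      (#s * ‖b - a‖₊ ^ 2 / 4) P where
  integrable_exp_mul t :=
    hX.integrable_comp hXm fun v => exp (t * ∑ k ∈ s, (v k - (∑ i, x i) / N))
  mgf_le t := by
    set z : Fin N → ℝ := fun i => exp (t * (x i - (∑ j, x j) / N))
    calc mgf _ P t = (N ! : ℝ)⁻¹ * ∑ e : Perm (Fin N), ∏ k ∈ s, z (e k) := by
          rw [mgf, hX.integral_comp hXm fun v => exp (t * ∑ k ∈ s, (v k - (∑ i, x i) / N))]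
          simp only [z, mul_sum, exp_sum]
      _ ≤ (N ! : ℝ)⁻¹ * (N ! * ((∑ i, z i) / N) ^ #s) := by
          gcongr
          simpa using sum_perm_prod_le (y := z) (fun i => (exp_pos _).le) s
      _ = ((∑ i, z i) / N) ^ #s := by field_simp
      _ ≤ exp ((b - a) ^ 2 / 8 * t ^ 2) ^ #s := by
          gcongr
          simpa using mean_exp_mul_sub_mean_le hx t
      _ = exp ((#s * ‖b - a‖₊ ^ 2 / 4 : ℝ≥0) * t ^ 2 / 2) := by
          rw [← exp_nat_mul]
          push_cast
          rw [Real.norm_eq_abs, sq_abs]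
          ring_nf

theorem measureReal_sum_sub_mean_ge_le [NeZero N] (hX : samplesWithoutReplacement P N x X)
    (hXm : ∀ i, Measurable (X i)) {a b : ℝ} (hx : ∀ i, x i ∈ Set.Icc a b)
    (s : Finset (Fin N)) {ε : ℝ} (hε : 0 ≤ ε) :
    P.real {ω | #s * ε ≤ ∑ k ∈ s, (X k ω - (∑ i, x i) / N)} ≤
      exp (-(2 * #s * ε ^ 2) / (b - a) ^ 2) := by
  refine ((hX.hasSubgaussianMGF_sum_sub_mean hXm hx s).measure_ge_le
    (by positivity)).trans_eq ?_
  push_cast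
  rw [Real.norm_eq_abs, sq_abs]
  obtain hs | hs := eq_or_ne (#s : ℝ) 0
  · simp [hs]
  · rw [show 2 * (#s * (b - a) ^ 2 / 4) = #s * ((b - a) ^ 2 / 2) by ring,
      show -(#s * ε) ^ 2 = #s * -(#s * ε ^ 2) by ring, mul_div_mul_left _ _ hs,
      div_div_eq_mul_div]
    ring_nf

end samplesWithoutReplacement

theorem hoeffding_without_replacement_general
    {Ω : Type*} [MeasurableSpace Ω] (P : Measure Ω) [IsProbabilityMeasure P]
    (N n : ℕ) (hn1 : 1 ≤ n) (hn : n ≤ N) (x : Fin N → ℝ)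
    (X : ℕ → Ω → ℝ) (hXm : ∀ i, Measurable (X i))
    (hX : samplesWithoutReplacement P N x X)
    (a b : ℝ) (ha : IsLeast (Set.range x) a) (hb : IsGreatest (Set.range x) b)
    (μ : ℝ) (hμ : μ = (∑ i, x i) / N)
    (ε : ℝ) (hε : 0 < ε) :
    P {ω | (1 / n) * ∑ t ∈ Finset.range n, X t ω - μ ≥ ε} ≤
      ENNReal.ofReal (Real.exp (-(2 * n * ε ^ 2) / (b - a) ^ 2)) := by
  subst hμ
  have : NeZero N := ⟨by omega⟩
  have hn0 : (0 : ℝ) < n := by exact_mod_cast hn1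
  have hx : ∀ i, x i ∈ Set.Icc a b := fun i => ⟨ha.2 ⟨i, rfl⟩, hb.2 ⟨i, rfl⟩⟩
  have hlt : ∀ m ∈ range n, m < N := fun m hm => (mem_range.1 hm).trans_le hn
  set s := (range n).attachFin hlt
  have hs : #s = n := by simp [s]
  have hrange (ω : Ω) : ∑ k ∈ s, X k ω = ∑ t ∈ range n, X t ω := by
    rw [← map_valEmbedding_attachFin hlt, sum_map]
    rfl
  calc P {ω | (1 / n) * ∑ t ∈ range n, X t ω - (∑ i, x i) / N ≥ ε}
      ≤ P {ω | #s * ε ≤ ∑ k ∈ s, (X k ω - (∑ i, x i) / N)} := measure_mono fun ω hω => by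
        rw [Set.mem_ofPred_eq, ge_iff_le, one_div_mul_eq_div, le_sub_iff_add_le,
          le_div_iff₀ hn0] at hω
        rw [Set.mem_ofPred_eq, sum_sub_distrib, sum_const, nsmul_eq_mul, hrange, hs]
        linarith
    _ = ENNReal.ofReal (P.real {ω | #s * ε ≤ ∑ k ∈ s, (X k ω - (∑ i, x i) / N)}) :=
        (ofReal_measureReal).symm
    _ ≤ ENNReal.ofReal (exp (-(2 * n * ε ^ 2) / (b - a) ^ 2)) := by
        rw [← hs]
        exact ENNReal.ofReal_le_ofReal (hX.measureReal_sum_sub_mean_ge_le hXm hx s hε.le)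

/-- Hoeffding's inequality for sampling without replacement. -/
theorem hoeffding_without_replacement
    {Ω : Type*} [MeasurableSpace Ω] (P : Measure Ω) [IsProbabilityMeasure P]
    (N n : ℕ) (hN : 1 ≤ N) (hn1 : 1 ≤ n) (hn : n ≤ N) (x : Fin N → ℝ)
    (X : ℕ → Ω → ℝ) (hXm : ∀ i, Measurable (X i))
    (hX : samplesWithoutReplacement P N x X)
    (a b : ℝ) (ha : IsLeast (Set.range x) a) (hb : IsGreatest (Set.range x) b)
    (μ : ℝ) (hμ : μ = (∑ i, x i) / N)
    (ε : ℝ) (hε : 0 < ε) :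
    P {ω | (1 / n) * ∑ t ∈ Finset.range n, X t ω - μ ≥ ε} ≤
      ENNReal.ofReal (Real.exp (-(2 * n * ε ^ 2) / (b - a) ^ 2)) :=
  hoeffding_without_replacement_general P N n hn1 hn x X hXm hX a b ha hb μ hμ ε hε
end

section
/- Let X_1,...,X_N be a uniformly random permutation of a finite population (x_1,...,x_N) with mean μ. Define Z_k* = (1/(N−k))∑_{t=1}^k (X_t − μ) for 1 ≤ k ≤ N−1. Then (Z_k*)_{k=1}^{N−1} is a martingale with respect to its natural filtration: E[Z_k* | Z_1*,...,Z_{k−1}*] = Z_{k−1}*. -/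
open MeasureTheory Finset Real
open scoped ENNReal


/-!
Given the first `m` draws, the next draw is uniform over the `N - m` values not yet drawn,
whose centered sum is `-S_m`, where `S_m = ∑_{t < m} (X_t - μ)`. Hence the next centered draw has
conditional mean `-S_m / (N - m)`, and `Z*_{m+1} = (S_m + X_m - μ) / (N - m - 1)` has conditional
mean `S_m / (N - m) = Z*_m`; since `Z*_1, …, Z*_m` are functions of the first `m` draws, this is
the martingale property. Under the law of a uniform ordering every expectation is an average over
the `N!` orderings, and "uniform over the remaining values" becomes the invariance of that average
under composing with a transposition of position `m` and a later position.
-/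

open scoped Nat

lemma Finset.sum_range_eq_sum_filter_fin {M : Type*} [AddCommMonoid M] (f : ℕ → M) {n N : ℕ}
    (hn : n ≤ N) : ∑ t ∈ range n, f t = ∑ i : Fin N with i.val < n, f i := by
  rw [sum_filter, Fin.sum_univ_eq_sum_range (fun t => if t < n then f t else 0), ← sum_filter]
  congr 1
  ext t
  simp only [mem_range, mem_filter, iff_and_self]
  omega

lemma MeasureTheory.condExp_comp_ae_eq_of_forall_setIntegral_map_eq {Ω α β : Type*}
    [MeasurableSpace Ω] [MeasurableSpace α] [MeasurableSpace β] {P : Measure Ω}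
    [IsFiniteMeasure P] {Y : Ω → α} (hY : Measurable Y) {W : α → β} (hW : Measurable W)
    {f g : α → ℝ} (hf : Integrable f (P.map Y)) (hg : Integrable g (P.map Y))
    (hgW : StronglyMeasurable[MeasurableSpace.comap W inferInstance] g)
    (hfg : ∀ B, MeasurableSet B → ∫ a in W ⁻¹' B, f a ∂P.map Y = ∫ a in W ⁻¹' B, g a ∂P.map Y) :
    P[f ∘ Y | MeasurableSpace.comap (W ∘ Y) inferInstance] =ᵐ[P] g ∘ Y := by
  have hfY := (integrable_map_measure hf.1 hY.aemeasurable).mp hf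
  have hgY := (integrable_map_measure hg.1 hY.aemeasurable).mp hg
  refine (ae_eq_condExp_of_forall_setIntegral_eq (hW.comp hY).comap_le hfY
    (fun _ _ _ => hgY.integrableOn) ?_ ?_).symm
  · rintro _ ⟨B, hB, rfl⟩ -
    simp only [Function.comp_apply]
    rw [Set.preimage_comp, ← setIntegral_map (hW hB) hg.1 hY.aemeasurable,
      ← setIntegral_map (hW hB) hf.1 hY.aemeasurable, hfg B hB]
  · rw [← MeasurableSpace.comap_comp]
    exact (hgW.comp_measurable (comap_measurable Y)).aestronglyMeasurable

namespace SamplingWithoutReplacement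

variable {N : ℕ}

noncomputable def permutationLaw (x : Fin N → ℝ) : Measure (Fin N → ℝ) :=
  (N ! : ℝ≥0∞)⁻¹ • ∑ e : Equiv.Perm (Fin N), Measure.dirac (fun i => x (e i))

lemma integrable_permutationLaw (x : Fin N → ℝ) (f : (Fin N → ℝ) → ℝ) :
    Integrable f (permutationLaw x) :=
  (integrable_finsetSum_measure.mpr fun _ _ => integrable_dirac enorm_lt_top).smul_measure
    (by simp [Nat.factorial_ne_zero])

lemma setIntegral_permutationLaw (x : Fin N → ℝ) (f : (Fin N → ℝ) → ℝ) {s : Set (Fin N → ℝ)}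
    (hs : MeasurableSet s) :
    ∫ v in s, f v ∂permutationLaw x =
      (N ! : ℝ)⁻¹ * ∑ e : Equiv.Perm (Fin N), s.indicator f (x ∘ e) := by
  rw [← integral_indicator hs, permutationLaw, integral_smul_measure,
    integral_finsetSum_measure fun _ _ => integrable_dirac enorm_lt_top]
  simp [integral_dirac, Function.comp_def]

noncomputable def centeredPartialSum (μ : ℝ) (n : ℕ) (v : Fin N → ℝ) : ℝ :=
  ∑ i : Fin N with i.val < n, (v i - μ)

noncomputable def zStar (μ : ℝ) (n : ℕ) (v : Fin N → ℝ) : ℝ :=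
  centeredPartialSum μ n v / (N - n)

noncomputable def zStarPath (μ : ℝ) (m : ℕ) (v : Fin N → ℝ) : Fin m → ℝ :=
  fun j => zStar μ (j + 1) v

lemma centeredPartialSum_succ (μ : ℝ) {m : ℕ} (hm : m < N) (v : Fin N → ℝ) :
    centeredPartialSum μ (m + 1) v = centeredPartialSum μ m v + (v ⟨m, hm⟩ - μ) := by
  have : filter (fun i : Fin N => i.val < m + 1) univ =
      insert ⟨m, hm⟩ (filter (fun i : Fin N => i.val < m) univ) := by
    ext i
    simp only [Order.lt_add_one_iff, mem_filter, mem_univ, true_and, mem_insert, Fin.ext_iff]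
    omega
  rw [centeredPartialSum, centeredPartialSum, this, sum_insert (by simp), add_comm]

lemma dependsOn_centeredPartialSum (μ : ℝ) (n : ℕ) :
    DependsOn (centeredPartialSum (N := N) μ n) {i | i.val < n} := fun _ _ h =>
  sum_congr rfl fun i hi => by rw [h i (mem_filter.mp hi).2]

lemma dependsOn_zStar (μ : ℝ) (n : ℕ) : DependsOn (zStar (N := N) μ n) {i | i.val < n} :=
  fun _ _ h => congrArg (· / _) (dependsOn_centeredPartialSum μ n h)

lemma dependsOn_zStarPath (μ : ℝ) (m : ℕ) :
    DependsOn (zStarPath (N := N) μ m) {i | i.val < m} := fun _ _ h =>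
  funext fun j => dependsOn_zStar μ _ fun i hi => h i (show i.val < m from hi.trans_le j.2)

lemma measurable_zStar (μ : ℝ) (n : ℕ) : Measurable (zStar (N := N) μ n) := by
  unfold zStar centeredPartialSum
  fun_prop

lemma measurable_zStarPath (μ : ℝ) (m : ℕ) : Measurable (zStarPath (N := N) μ m) :=
  measurable_pi_lambda _ fun _ => measurable_zStar μ _

open Equiv in
lemma sub_mul_sum_perm_mul_centered_apply (x : Fin N → ℝ) {μ : ℝ} (hμ : μ = (∑ i, x i) / N)
    {G : (Fin N → ℝ) → ℝ} {m : ℕ} (hG : DependsOn G {i | i.val < m}) (hm : m < N) :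
    ((N : ℝ) - m) * ∑ e : Perm (Fin N), G (x ∘ e) * (x (e ⟨m, hm⟩) - μ)
      = -∑ e : Perm (Fin N), G (x ∘ e) * centeredPartialSum μ m (x ∘ e) := by
  have hcard := card_filter_add_card_filter_not (s := univ) (fun j : Fin N => j.val < m)
  set T : Finset (Fin N) := filter (fun j : Fin N => ¬ j.val < m) univ
  have hT : (#T : ℝ) = N - m := by
    rw [Fin.card_filter_val_lt, card_univ, Fintype.card_fin, min_eq_right hm.le] at hcard
    rw [show #T = N - m by omega, Nat.cast_sub hm.le]
  -- `swap ⟨m, hm⟩ j` fixes the positions below `m`, so reindexing by it leaves `G` unchanged.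
  have hswap : ∀ j ∈ T, ∑ e : Perm (Fin N), G (x ∘ e) * (x (e ⟨m, hm⟩) - μ)
      = ∑ e : Perm (Fin N), G (x ∘ e) * (x (e j) - μ) := by
    intro j hj
    have hj : m ≤ j.val := by simpa [T] using hj
    rw [← Equiv.sum_comp (Equiv.mulRight (swap ⟨m, hm⟩ j))]
    refine sum_congr rfl fun e _ => ?_
    have hfix : ∀ i ∈ {i : Fin N | i.val < m}, (x ∘ ⇑(e * swap ⟨m, hm⟩ j)) i = (x ∘ e) i := by
      intro i (hi : i.val < m)
      rw [Function.comp_apply, Perm.mul_apply, swap_apply_of_ne_of_ne (Fin.ne_of_val_ne hi.ne)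
        (Fin.ne_of_val_ne (hi.trans_le hj).ne)]
      rfl
    rw [Equiv.coe_mulRight, hG hfix, Perm.mul_apply, swap_apply_left]
  have htail (e : Perm (Fin N)) : ∑ j ∈ T, (x (e j) - μ) = -centeredPartialSum μ m (x ∘ e) := by
    have htotal : ∑ j, (x (e j) - μ) = 0 := by
      rw [Equiv.sum_comp e (fun j => x j - μ), sum_sub_distrib, sum_const, card_univ,
        Fintype.card_fin, nsmul_eq_mul, hμ]
      rcases N.eq_zero_or_pos with rfl | hN
      · simp
      · field_simp
        ring
    rw [← sum_filter_add_sum_filter_not univ (fun j : Fin N => j.val < m)] at htotal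
    simp only [centeredPartialSum, Function.comp_apply]
    linarith
  calc ((N : ℝ) - m) * ∑ e : Perm (Fin N), G (x ∘ e) * (x (e ⟨m, hm⟩) - μ)
      = ∑ j ∈ T, ∑ e : Perm (Fin N), G (x ∘ e) * (x (e j) - μ) := by
        rw [← hT, ← nsmul_eq_mul, ← sum_const, sum_congr rfl hswap]
    _ = ∑ e : Perm (Fin N), G (x ∘ e) * ∑ j ∈ T, (x (e j) - μ) := by
        rw [sum_comm]
        simp only [mul_sum]
    _ = _ := by simp only [htail, mul_neg, sum_neg_distrib]

open Equiv in
lemma sum_perm_mul_zStar_succ (x : Fin N → ℝ) {μ : ℝ} (hμ : μ = (∑ i, x i) / N)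
    {G : (Fin N → ℝ) → ℝ} {m : ℕ} (hG : DependsOn G {i | i.val < m}) (hm : m + 1 < N) :
    ∑ e : Perm (Fin N), G (x ∘ e) * zStar μ (m + 1) (x ∘ e)
      = ∑ e : Perm (Fin N), G (x ∘ e) * zStar μ m (x ∘ e) := by
  have hnext := sub_mul_sum_perm_mul_centered_apply x hμ hG (by omega : m < N)
  set A := ∑ e : Perm (Fin N), G (x ∘ e) * centeredPartialSum μ m (x ∘ e)
  set B := ∑ e : Perm (Fin N), G (x ∘ e) * (x (e ⟨m, by omega⟩) - μ)
  have hlhs : ∑ e : Perm (Fin N), G (x ∘ e) * zStar μ (m + 1) (x ∘ e) =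
      (A + B) / (N - (m + 1)) := by
    simp only [zStar, centeredPartialSum_succ μ (by omega : m < N), mul_div_assoc', ← sum_div,
      mul_add, sum_add_distrib, Function.comp_apply, Nat.cast_succ]
    rfl
  have hrhs : ∑ e : Perm (Fin N), G (x ∘ e) * zStar μ m (x ∘ e) = A / (N - m) := by
    simp only [zStar, mul_div_assoc', ← sum_div]
    rfl
  have hm' : (m : ℝ) + 1 < N := by exact_mod_cast hm
  rw [hlhs, hrhs, div_eq_div_iff (by linarith) (by linarith)]
  linear_combination hnext

open Equiv in
lemma sum_perm_indicator_zStar_succ (x : Fin N → ℝ) {μ : ℝ} (hμ : μ = (∑ i, x i) / N) {m : ℕ}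
    (hm : m + 1 < N) (B : Set (Fin m → ℝ)) :
    ∑ e : Perm (Fin N), (zStarPath μ m ⁻¹' B).indicator (zStar μ (m + 1)) (x ∘ e)
      = ∑ e : Perm (Fin N), (zStarPath μ m ⁻¹' B).indicator (zStar μ m) (x ∘ e) := by
  have hG : DependsOn (fun v : Fin N → ℝ => B.indicator (1 : (Fin m → ℝ) → ℝ) (zStarPath μ m v))
      {i | i.val < m} := fun _ _ h => congrArg _ (dependsOn_zStarPath μ m h)
  have hind (f : (Fin N → ℝ) → ℝ) (v : Fin N → ℝ) :
      B.indicator 1 (zStarPath μ m v) * f v = (zStarPath μ m ⁻¹' B).indicator f v := by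
    by_cases hv : zStarPath μ m v ∈ B <;> simp [hv]
  simpa only [hind] using sum_perm_mul_zStar_succ x hμ hG hm

end SamplingWithoutReplacement

open SamplingWithoutReplacement in
theorem forward_martingale_Zstar_general
    {Ω : Type*} [MeasurableSpace Ω] (P : Measure Ω) [IsProbabilityMeasure P]
    (N : ℕ) (x : Fin N → ℝ)
    (X : ℕ → Ω → ℝ) (hXm : ∀ i, Measurable (X i))
    (hX : samplesWithoutReplacement P N x X)
    (μ : ℝ) (hμ : μ = (∑ i, x i) / N)
    (Zs : ℕ → Ω → ℝ)
    (hZs : ∀ k ω, Zs k ω = (∑ t ∈ Finset.range k, (X t ω - μ)) / ((N : ℝ) - k))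
    (k : ℕ) (hk1 : 2 ≤ k) (hk : k ≤ N - 1) :
    MeasureTheory.condExp
        (MeasurableSpace.comap (fun ω (j : Fin (k - 1)) => Zs (j + 1) ω) inferInstance)
        P (Zs k)
      =ᵐ[P] Zs (k - 1) := by
  set Y : Ω → Fin N → ℝ := fun ω i => X i ω
  have hY : Measurable Y := measurable_pi_lambda _ fun i => hXm i
  have hlaw : P.map Y = permutationLaw x := hX
  have hZ : ∀ n ≤ N, Zs n = zStar μ n ∘ Y := fun n hn => funext fun ω => by
    rw [hZs, Function.comp_apply, zStar, centeredPartialSum, sum_range_eq_sum_filter_fin _ hn]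
  have hpath : (fun ω (j : Fin (k - 1)) => Zs (j + 1) ω) = zStarPath μ (k - 1) ∘ Y := by
    funext ω j
    rw [hZ _ (by omega)]
    rfl
  have hlast : zStar (N := N) μ (k - 1) =
      (fun w => w ⟨k - 2, by omega⟩) ∘ zStarPath μ (k - 1) := by
    funext v
    simp only [Function.comp_apply, zStarPath]
    congr 1
    omega
  rw [hpath, hZ k (by omega), hZ (k - 1) (by omega)]
  refine condExp_comp_ae_eq_of_forall_setIntegral_map_eq hY (measurable_zStarPath μ _)
    (hlaw ▸ integrable_permutationLaw x _) (hlaw ▸ integrable_permutationLaw x _) ?_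
    fun B hB => ?_
  · rw [hlast]
    exact ((measurable_pi_apply _).comp (comap_measurable (zStarPath μ (k - 1)))).stronglyMeasurable
  · have hB' := measurable_zStarPath (N := N) μ (k - 1) hB
    rw [hlaw, setIntegral_permutationLaw x _ hB', setIntegral_permutationLaw x _ hB',
      show zStar μ k = zStar μ (k - 1 + 1) by rw [Nat.sub_add_cancel (by omega)],
      sum_perm_indicator_zStar_succ x hμ (by omega)]

/-- Forward martingale structure of `Z_k* = (1/(N-k)) ∑_{t=1}^k (X_t - μ)`:
`E[Z_k* | Z_1*, …, Z_{k-1}*] = Z_{k-1}*`. -/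
theorem forward_martingale_Zstar
    {Ω : Type*} [MeasurableSpace Ω] (P : Measure Ω) [IsProbabilityMeasure P]
    (N : ℕ) (hN : 2 ≤ N) (x : Fin N → ℝ)
    (X : ℕ → Ω → ℝ) (hXm : ∀ i, Measurable (X i))
    (hX : samplesWithoutReplacement P N x X)
    (μ : ℝ) (hμ : μ = (∑ i, x i) / N)
    (Zs : ℕ → Ω → ℝ)
    (hZs : ∀ k ω, Zs k ω = (∑ t ∈ Finset.range k, (X t ω - μ)) / ((N : ℝ) - k))
    (k : ℕ) (hk1 : 2 ≤ k) (hk : k ≤ N - 1) :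
    MeasureTheory.condExp
        (MeasurableSpace.comap (fun ω (j : Fin (k - 1)) => Zs (j + 1) ω) inferInstance)
        P (Zs k)
      =ᵐ[P] Zs (k - 1) :=
  forward_martingale_Zstar_general P N x X hXm hX μ hμ Zs hZs k hk1 hk
end

section
/- Let X_1,...,X_N be a uniformly random permutation of a finite population (x_1,...,x_N) with mean μ. Define Z_k = (1/k)∑_{t=1}^k (X_t − μ). Then (Z_k) is a reverse martingale: for 1 ≤ k ≤ N−2, E[Z_k | Z_{k+1},...,Z_{N−1}] = Z_{k+1}. -/
/-!
Sampling without replacement makes `(X 0, …, X (N-1))` exchangeable: its law is invariant under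
every permutation of the coordinates. The later partial means `Z (k+1), …, Z (N-1)` are symmetric
functions of `X 0, …, X k`, so a transposition of two of these coordinates fixes every event of
`σ(Z (k+1), …, Z (N-1))`; hence `X 0, …, X k` all have the same integral over such an event `s`.
Then `Z k` and `Z (k+1)` both integrate over `s` to `∫ ω in s, X 0 ω ∂P - μ P(s)`, which is the
defining property of the conditional expectation, `Z (k+1)` being measurable for that σ-algebra.
-/

open MeasureTheory Finset Real
open scoped ENNReal

open Equiv

lemma map_comp_perm_sum_dirac {ι α : Type*} [Fintype ι] [DecidableEq ι] [MeasurableSpace α]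
    (x : ι → α) (σ : Perm ι) :
    (∑ e : Perm ι, Measure.dirac fun i => x (e i)).map (· ∘ σ) =
      ∑ e : Perm ι, Measure.dirac fun i => x (e i) := by
  have hσ : Measurable fun y : ι → α => y ∘ σ :=
    measurable_pi_lambda _ fun i => measurable_pi_apply _
  rw [Measure.map_finset_sum' hσ.aemeasurable]
  simp_rw [Measure.map_dirac' hσ]
  exact Equiv.sum_comp (Equiv.mulRight σ) fun e => Measure.dirac fun i => x (e i)

section Exchangeability

variable {Ω : Type*} [MeasurableSpace Ω] {P : Measure Ω}

lemma map_comp_perm_of_samplesWithoutReplacement {N : ℕ} {x : Fin N → ℝ} {X : ℕ → Ω → ℝ}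
    (hX : samplesWithoutReplacement P N x X) (σ : Perm (Fin N)) :
    (P.map fun ω (i : Fin N) => X i ω).map (· ∘ σ) = P.map fun ω (i : Fin N) => X i ω := by
  rw [hX, Measure.map_smul, map_comp_perm_sum_dirac]

lemma integrable_of_samplesWithoutReplacement {N : ℕ} {x : Fin N → ℝ} {X : ℕ → Ω → ℝ}
    (hXm : ∀ t, Measurable (X t)) (hX : samplesWithoutReplacement P N x X) {t : ℕ} (ht : t < N) :
    Integrable (X t) P := by
  have hY : Measurable fun ω (i : Fin N) => X i ω := measurable_pi_lambda _ fun i => hXm i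
  have hcoord : Measurable fun y : Fin N → ℝ => y ⟨t, ht⟩ := measurable_pi_apply _
  refine (integrable_map_measure hcoord.aestronglyMeasurable hY.aemeasurable).1 ?_
  rw [hX]
  exact (integrable_finsetSum_measure.2 fun e _ => integrable_dirac (by simp)).smul_measure
    (by simp [Nat.factorial_ne_zero])

lemma setIntegral_preimage_apply_eq_of_map_comp_swap {ι : Type*} [DecidableEq ι]
    {Y : Ω → ι → ℝ} (hY : Measurable Y) {a b : ι}
    (hswap : (P.map Y).map (· ∘ swap a b) = P.map Y) {B : Set (ι → ℝ)} (hB : MeasurableSet B)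
    (hBswap : (· ∘ swap a b) ⁻¹' B = B) :
    ∫ ω in Y ⁻¹' B, Y ω a ∂P = ∫ ω in Y ⁻¹' B, Y ω b ∂P := by
  have hσ : Measurable fun y : ι → ℝ => y ∘ swap a b :=
    measurable_pi_lambda _ fun i => measurable_pi_apply _
  have hmap (i : ι) : ∫ y in B, y i ∂P.map Y = ∫ ω in Y ⁻¹' B, Y ω i ∂P :=
    setIntegral_map hB (measurable_pi_apply i).aestronglyMeasurable hY.aemeasurable
  calc ∫ ω in Y ⁻¹' B, Y ω a ∂P
      = ∫ y in B, y a ∂(P.map Y).map (· ∘ swap a b) := by rw [hswap, hmap]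
    _ = ∫ y in B, y b ∂P.map Y := by
      rw [setIntegral_map hB (measurable_pi_apply a).aestronglyMeasurable hσ.aemeasurable, hBswap]
      simp [swap_apply_left]
    _ = ∫ ω in Y ⁻¹' B, Y ω b ∂P := hmap b

end Exchangeability

section CenteredMean

noncomputable def centeredMean (μ : ℝ) (m : ℕ) (u : ℕ → ℝ) : ℝ :=
  (∑ t ∈ range m, (u t - μ)) / m

variable {μ : ℝ} {m : ℕ}

lemma centeredMean_congr {u v : ℕ → ℝ} (h : ∀ t < m, u t = v t) :
    centeredMean μ m u = centeredMean μ m v := by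
  unfold centeredMean
  congr 1
  exact sum_congr rfl fun t ht => by rw [h t (mem_range.1 ht)]

lemma centeredMean_comp_swap {a b : ℕ} (ha : a < m) (hb : b < m) (u : ℕ → ℝ) :
    centeredMean μ m (u ∘ swap a b) = centeredMean μ m u := by
  unfold centeredMean
  congr 1
  refine Perm.sum_comp (swap a b) (range m) (fun t => u t - μ) fun t ht => ?_
  by_contra hmem
  exact ht (swap_apply_of_ne_of_ne (by grind) (by grind))

lemma measurable_centeredMean (μ : ℝ) (m : ℕ) : Measurable (centeredMean μ m) :=
  (measurable_sum _ fun t _ => (measurable_pi_apply t).sub measurable_const).div_const _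

variable {Ω : Type*} [MeasurableSpace Ω] {P : Measure Ω} {X : ℕ → Ω → ℝ}

lemma integrable_centeredMean [IsFiniteMeasure P] (hint : ∀ t < m, Integrable (X t) P) :
    Integrable (fun ω => centeredMean μ m (X · ω)) P :=
  (integrable_finsetSum _ fun t ht =>
    (hint t (mem_range.1 ht)).sub (integrable_const μ)).div_const _

lemma setIntegral_centeredMean_of_forall_eq [IsFiniteMeasure P] (hm : m ≠ 0)
    (hint : ∀ t < m, Integrable (X t) P) {s : Set Ω} {c : ℝ}
    (hc : ∀ t < m, ∫ ω in s, X t ω ∂P = c) :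
    ∫ ω in s, centeredMean μ m (X · ω) ∂P = c - μ * P.real s := by
  have hterm : ∀ t ∈ range m, ∫ ω in s, (X t ω - μ) ∂P = c - μ * P.real s := fun t ht => by
    rw [integral_sub (hint t (mem_range.1 ht)).integrableOn (integrable_const μ),
      hc t (mem_range.1 ht), setIntegral_const, smul_eq_mul, mul_comm]
  unfold centeredMean
  rw [integral_div, integral_finsetSum (f := fun t ω => X t ω - μ) _ fun t ht =>
      (hint t (mem_range.1 ht)).integrableOn.sub (integrable_const μ),
    sum_congr rfl hterm, sum_const, card_range, nsmul_eq_mul]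
  field_simp

end CenteredMean

def zeroExtend {N : ℕ} (y : Fin N → ℝ) (t : ℕ) : ℝ := if h : t < N then y ⟨t, h⟩ else 0

lemma zeroExtend_of_lt {N t : ℕ} (h : t < N) (y : Fin N → ℝ) : zeroExtend y t = y ⟨t, h⟩ :=
  dif_pos h

lemma zeroExtend_comp_swap {N : ℕ} (y : Fin N → ℝ) (a b : Fin N) :
    zeroExtend (y ∘ swap a b) = zeroExtend y ∘ swap (a : ℕ) b := by
  funext t
  by_cases ht : t < N
  · obtain ⟨c, rfl⟩ : ∃ c : Fin N, (c : ℕ) = t := ⟨⟨t, ht⟩, rfl⟩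
    simp [zeroExtend_of_lt, Fin.val_injective.swap_apply]
  · have ha : t ≠ a := by omega
    have hb : t ≠ b := by omega
    simp [zeroExtend, ht, swap_apply_of_ne_of_ne ha hb]

lemma measurable_zeroExtend {N : ℕ} : Measurable (zeroExtend : (Fin N → ℝ) → ℕ → ℝ) := by
  refine measurable_pi_lambda _ fun t => ?_
  by_cases ht : t < N
  · simpa only [zeroExtend, ht, dif_pos] using measurable_pi_apply (⟨t, ht⟩ : Fin N)
  · simpa only [zeroExtend, ht, dif_neg, not_false_eq_true] using measurable_const

theorem condExp_centeredMean_eq_of_exchangeable {Ω : Type*} [MeasurableSpace Ω] {P : Measure Ω}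
    [IsProbabilityMeasure P] {N : ℕ} {X : ℕ → Ω → ℝ} (hXm : ∀ t, Measurable (X t))
    (hexch : ∀ σ : Perm (Fin N),
      (P.map fun ω (i : Fin N) => X i ω).map (· ∘ σ) = P.map fun ω (i : Fin N) => X i ω)
    (hint : ∀ t < N, Integrable (X t) P) (μ : ℝ) {k : ℕ} (hk1 : 1 ≤ k) (hkN : k + 2 ≤ N) :
    P[fun ω => centeredMean μ k (X · ω) |
        MeasurableSpace.comap (fun ω (j : Fin (N - 1 - k)) => centeredMean μ (k + 1 + j) (X · ω))
          inferInstance]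
      =ᵐ[P] fun ω => centeredMean μ (k + 1) (X · ω) := by
  set Y : Ω → Fin N → ℝ := fun ω i => X i ω
  set F : (Fin N → ℝ) → Fin (N - 1 - k) → ℝ := fun y j => centeredMean μ (k + 1 + j) (zeroExtend y)
  have hY : Measurable Y := measurable_pi_lambda _ fun i => hXm i
  have hF : Measurable F :=
    measurable_pi_lambda _ fun j => (measurable_centeredMean μ _).comp measurable_zeroExtend
  have hfF : (fun ω (j : Fin (N - 1 - k)) => centeredMean μ (k + 1 + j) (X · ω)) = F ∘ Y :=
    funext₂ fun ω j => centeredMean_congr fun t ht => (zeroExtend_of_lt (by omega) (Y ω)).symm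
  have hFswap (a b : Fin N) (ha : (a : ℕ) ≤ k) (hb : (b : ℕ) ≤ k) :
      F ∘ (· ∘ swap a b) = F := by
    funext y j
    simp only [F, Function.comp_apply, zeroExtend_comp_swap]
    exact centeredMean_comp_swap (by omega) (by omega) _
  rw [hfF]
  refine (ae_eq_condExp_of_forall_setIntegral_eq (hF.comp hY).comap_le
    (integrable_centeredMean fun t ht => hint t (by omega))
    (fun s _ _ => (integrable_centeredMean fun t ht => hint t (by omega)).integrableOn) ?_ ?_).symm
  · rintro s ⟨A, hA, rfl⟩ -
    rw [Set.preimage_comp]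
    have hcoord (t : ℕ) (ht : t < k + 1) :
        ∫ ω in Y ⁻¹' (F ⁻¹' A), X t ω ∂P = ∫ ω in Y ⁻¹' (F ⁻¹' A), X 0 ω ∂P :=
      setIntegral_preimage_apply_eq_of_map_comp_swap (a := ⟨t, by omega⟩) (b := ⟨0, by omega⟩)
        hY (hexch _) (hF hA)
        (by rw [← Set.preimage_comp, hFswap _ _ (Nat.le_of_lt_succ ht) (Nat.zero_le k)])
    rw [setIntegral_centeredMean_of_forall_eq (by omega) (fun t ht => hint t (by omega)) hcoord,
      setIntegral_centeredMean_of_forall_eq (by omega) (fun t ht => hint t (by omega))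
        fun t ht => hcoord t (by omega)]
  · have hZ_meas : Measurable[MeasurableSpace.comap (F ∘ Y) inferInstance]
        fun ω => (F ∘ Y) ω ⟨0, by omega⟩ :=
      (measurable_pi_apply (⟨0, by omega⟩ : Fin (N - 1 - k))).comp (comap_measurable (F ∘ Y))
    exact hZ_meas.aestronglyMeasurable.congr
      (Filter.Eventually.of_forall fun ω => (congrFun (congrFun hfF ω) _).symm)

theorem reverse_martingale_Z_general
    {Ω : Type*} [MeasurableSpace Ω] (P : Measure Ω) [IsProbabilityMeasure P]
    (N : ℕ) (x : Fin N → ℝ)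
    (X : ℕ → Ω → ℝ) (hXm : ∀ i, Measurable (X i))
    (hX : samplesWithoutReplacement P N x X)
    (μ : ℝ)
    (Z : ℕ → Ω → ℝ)
    (hZ : ∀ k ω, Z k ω = (∑ t ∈ Finset.range k, (X t ω - μ)) / (k : ℝ))
    (k : ℕ) (hk1 : 1 ≤ k) (hk : k ≤ N - 2) :
    MeasureTheory.condExp
        (MeasurableSpace.comap (fun ω (j : Fin (N - 1 - k)) => Z (k + 1 + j) ω) inferInstance)
        P (Z k)
      =ᵐ[P] Z (k + 1) := by
  obtain rfl : Z = fun m ω => centeredMean μ m (X · ω) := funext₂ hZ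
  exact condExp_centeredMean_eq_of_exchangeable hXm (map_comp_perm_of_samplesWithoutReplacement hX)
    (fun t => integrable_of_samplesWithoutReplacement hXm hX) μ hk1 (by omega)

/-- Reverse martingale structure of `Z_k = (1/k) ∑_{t=1}^k (X_t - μ)`:
for `1 ≤ k ≤ N-2`, `E[Z_k | Z_{k+1}, …, Z_{N-1}] = Z_{k+1}`. -/
theorem reverse_martingale_Z
    {Ω : Type*} [MeasurableSpace Ω] (P : Measure Ω) [IsProbabilityMeasure P]
    (N : ℕ) (hN : 2 ≤ N) (x : Fin N → ℝ)
    (X : ℕ → Ω → ℝ) (hXm : ∀ i, Measurable (X i))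
    (hX : samplesWithoutReplacement P N x X)
    (μ : ℝ) (hμ : μ = (∑ i, x i) / N)
    (Z : ℕ → Ω → ℝ)
    (hZ : ∀ k ω, Z k ω = (∑ t ∈ Finset.range k, (X t ω - μ)) / (k : ℝ))
    (k : ℕ) (hk1 : 1 ≤ k) (hk : k ≤ N - 2) :
    MeasureTheory.condExp
        (MeasurableSpace.comap (fun ω (j : Fin (N - 1 - k)) => Z (k + 1 + j) ω) inferInstance)
        P (Z k)
      =ᵐ[P] Z (k + 1) :=
  reverse_martingale_Z_general P N x X hXm hX μ Z hZ k hk1 hk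
end

section
/- Let X_1,...,X_n be sampled without replacement from a finite population (x_1,...,x_N) with mean μ, minimum a and maximum b, and let Z_n = (1/n)∑_{t=1}^n (X_t − μ). Then for any λ > 0, log E[exp(λ n Z_n)] ≤ ((b−a)²/8) λ² n (1 − (n−1)/N). -/
/-!
Serfling's argument. Write `S_A(e) = ∑_{j ∈ A} (x (e j) - μ)` for the centred sum of the draws at
the positions `A` when the population is ordered by the uniform permutation `e`. Given those draws,
the draw at a new position is uniform over the `K = N - |A|` values left, whose centred mean is
`-S_A / K`; Hoeffding's lemma therefore gives
`E exp (t S_{A ∪ {p}}) ≤ exp ((b - a)² t² / 8) · E exp (t (1 - 1/K) S_A)`.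
Iterating over the first `n` positions, with `t` rescaled at each step, bounds the log-mgf by
`(b - a)² λ² (N - n)² / 8 · ∑_{k = N-n}^{N-1} 1 / k²`, and this sum is at most
`n (N - n + 1) / (N (N - n)²)`.
-/

open MeasureTheory Finset Real
open scoped ENNReal

open ProbabilityTheory
open scoped Nat

/-- Hoeffding's lemma for the uniform distribution on `s`. -/
lemma Finset.sum_exp_mul_le_of_mem_Icc {ι : Type*} {s : Finset ι} (hs : s.Nonempty)
    {y : ι → ℝ} {a b : ℝ} (hy : ∀ i ∈ s, y i ∈ Set.Icc a b) (t : ℝ) :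
    ∑ i ∈ s, exp (t * y i) ≤ #s * exp (t * ((∑ i ∈ s, y i) / #s) + (b - a) ^ 2 / 8 * t ^ 2) := by
  let _ : MeasurableSpace s := ⊤
  have : Nonempty s := hs.to_subtype
  set ν := (PMF.uniformOfFintype s).toMeasure
  have hcard : (0 : ℝ) < #s := by exact_mod_cast hs.card_pos
  have hν (f : s → ℝ) : ∫ i, f i ∂ν = (#s : ℝ)⁻¹ * ∑ i, f i := by
    simp [ν, PMF.integral_eq_sum, Finset.mul_sum]
  set m := (∑ i ∈ s, y i) / #s
  have hmean : ν[fun i : s ↦ y i] = m := by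
    rw [hν, Finset.sum_coe_sort s y, inv_mul_eq_div]
  have hoeffding := (hasSubgaussianMGF_of_mem_Icc (μ := ν) (X := fun i : s ↦ y i)
    (a := a) (b := b) (.of_discrete) (ae_of_all _ fun i ↦ hy i i.2)).mgf_le t
  rw [mgf, hν, hmean, inv_mul_le_iff₀ hcard, Finset.sum_coe_sort s (fun i ↦ exp (t * (y i - m)))]
    at hoeffding
  calc ∑ i ∈ s, exp (t * y i) = exp (t * m) * ∑ i ∈ s, exp (t * (y i - m)) := by
        rw [Finset.mul_sum]
        exact Finset.sum_congr rfl fun i _ ↦ by rw [← exp_add]; ring_nf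
    _ ≤ exp (t * m) * (#s * exp ((b - a) ^ 2 / 8 * t ^ 2)) := by
        gcongr
        convert hoeffding using 3
        push_cast [coe_nnnorm, norm_eq_abs, div_pow, sq_abs]; ring
    _ = _ := by rw [exp_add]; ring

lemma sum_Ico_inv_sq_le {M : ℕ} (hM : 1 ≤ M) {N : ℕ} (hMN : M ≤ N) :
    ∑ k ∈ Ico M N, 1 / (k : ℝ) ^ 2 ≤ ((N : ℝ) - M) * (M + 1) / (N * M ^ 2) := by
  induction N, hMN using Nat.le_induction with
  | base => simp
  | succ N hMN ih =>
    have hM1 : (1 : ℝ) ≤ M := by exact_mod_cast hM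
    have hMN' : (M : ℝ) ≤ N := by exact_mod_cast hMN
    have hstep : ((N : ℝ) - M) * (M + 1) / (N * M ^ 2) + 1 / (N : ℝ) ^ 2
        ≤ ((N + 1 : ℝ) - M) * (M + 1) / ((N + 1) * M ^ 2) := by
      rw [← sub_nonneg]
      have hgap : ((N + 1 : ℝ) - M) * (M + 1) / ((N + 1) * M ^ 2)
          - (((N : ℝ) - M) * (M + 1) / (N * M ^ 2) + 1 / (N : ℝ) ^ 2)
          = ((N : ℝ) - M) / (N ^ 2 * (N + 1) * M) := by
        have : (0 : ℝ) < N := by linarith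
        field_simp
        ring
      rw [hgap]
      exact div_nonneg (by linarith) (by positivity)
    rw [sum_Ico_succ_top hMN]
    push_cast
    linarith

lemma sq_mul_sum_Ico_inv_sq_le {n N : ℕ} (hn : n < N) :
    ((N - n : ℕ) : ℝ) ^ 2 * ∑ k ∈ Ico (N - n) N, 1 / (k : ℝ) ^ 2 ≤ n * (1 - ((n : ℝ) - 1) / N) := by
  have hN : (0 : ℝ) < N := Nat.cast_pos.mpr (by omega)
  have hNn : (0 : ℝ) < (N - n : ℕ) := Nat.cast_pos.mpr (by omega)
  calc _ ≤ ((N - n : ℕ) : ℝ) ^ 2 *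
        ((N - (N - n : ℕ)) * ((N - n : ℕ) + 1) / (N * (N - n : ℕ) ^ 2)) := by
        gcongr
        exact sum_Ico_inv_sq_le (by omega) (by omega)
    _ = _ := by
        field_simp
        rw [Nat.cast_sub hn.le]
        ring

section SamplingWithoutReplacement

variable {ι : Type*} {x : ι → ℝ}

def sampleSum (x : ι → ℝ) (A : Finset ι) (e : Equiv.Perm ι) : ℝ := ∑ j ∈ A, x (e j)

variable [DecidableEq ι]

lemma sampleSum_insert_mul_swap {A : Finset ι} {p m : ι} (hp : p ∉ A) (hm : m ∉ A)
    (e : Equiv.Perm ι) :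
    sampleSum x (insert p A) (e * Equiv.swap p m) = sampleSum x A e + x (e m) := by
  rw [sampleSum, sum_insert hp, add_comm, Equiv.Perm.mul_apply, Equiv.swap_apply_left]
  congr 1
  refine sum_congr rfl fun j hj ↦ ?_
  rw [Equiv.Perm.mul_apply, Equiv.swap_apply_of_ne_of_ne (ne_of_mem_of_not_mem hj hp)
    (ne_of_mem_of_not_mem hj hm)]

variable [Fintype ι]

lemma sum_compl_eq_neg_sampleSum (hx : ∑ i, x i = 0) (A : Finset ι) (e : Equiv.Perm ι) :
    ∑ m ∈ Aᶜ, x (e m) = -sampleSum x A e := by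
  have htotal : ∑ j, x (e j) = 0 := by rw [Equiv.sum_comp e x, hx]
  rw [← sum_add_sum_compl A] at htotal
  rw [sampleSum]
  linarith

/-- Averaging over the swaps of `p` with the free positions `m ∉ A` realises the conditional law
of the draw at `p` given the draws at `A`. -/
lemma card_compl_mul_sum_exp_sampleSum_insert {A : Finset ι} {p : ι} (hp : p ∉ A) (t : ℝ) :
    #Aᶜ * ∑ e, exp (t * sampleSum x (insert p A) e)
      = ∑ e, exp (t * sampleSum x A e) * ∑ m ∈ Aᶜ, exp (t * x (e m)) := by
  calc #Aᶜ * ∑ e, exp (t * sampleSum x (insert p A) e)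
      = ∑ m ∈ Aᶜ, ∑ e, exp (t * sampleSum x (insert p A) (e * Equiv.swap p m)) := by
        rw [← nsmul_eq_mul, ← sum_const]
        refine sum_congr rfl fun m _ ↦ ?_
        exact (Fintype.sum_equiv (Equiv.mulRight (Equiv.swap p m)) _ _ fun e ↦ rfl).symm
    _ = ∑ m ∈ Aᶜ, ∑ e, exp (t * sampleSum x A e) * exp (t * x (e m)) := by
        refine sum_congr rfl fun m hm ↦ sum_congr rfl fun e _ ↦ ?_
        rw [sampleSum_insert_mul_swap hp (mem_compl.mp hm), mul_add, exp_add]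
    _ = _ := by
        rw [sum_comm]
        simp_rw [mul_sum]

lemma sum_exp_sampleSum_insert_le {a b : ℝ} (hx : ∑ i, x i = 0)
    (hab : ∀ i, x i ∈ Set.Icc a b) {A : Finset ι} {p : ι} (hp : p ∉ A) (t : ℝ) :
    ∑ e, exp (t * sampleSum x (insert p A) e)
      ≤ exp ((b - a) ^ 2 / 8 * t ^ 2) * ∑ e, exp (t * (1 - 1 / #Aᶜ) * sampleSum x A e) := by
  have hA : Aᶜ.Nonempty := ⟨p, mem_compl.mpr hp⟩
  have hcard : (0 : ℝ) < #Aᶜ := by exact_mod_cast hA.card_pos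
  have hdraw (e : Equiv.Perm ι) : exp (t * sampleSum x A e) * ∑ m ∈ Aᶜ, exp (t * x (e m))
      ≤ #Aᶜ * (exp ((b - a) ^ 2 / 8 * t ^ 2) * exp (t * (1 - 1 / #Aᶜ) * sampleSum x A e)) := by
    have h := Finset.sum_exp_mul_le_of_mem_Icc hA (fun m _ ↦ hab (e m)) t
    rw [sum_compl_eq_neg_sampleSum hx] at h
    calc _ ≤ exp (t * sampleSum x A e)
          * (#Aᶜ * exp (t * (-sampleSum x A e / #Aᶜ) + (b - a) ^ 2 / 8 * t ^ 2)) := by gcongr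
      _ = _ := by
        rw [mul_left_comm, ← exp_add, ← exp_add]
        congr 2
        ring
  rw [← mul_le_mul_iff_right₀ hcard, card_compl_mul_sum_exp_sampleSum_insert hp, mul_sum, mul_sum]
  exact sum_le_sum fun e _ ↦ hdraw e

lemma sum_exp_sampleSum_le {a b : ℝ} (hx : ∑ i, x i = 0) (hab : ∀ i, x i ∈ Set.Icc a b)
    {A : Finset ι} (hA : Aᶜ.Nonempty) (t : ℝ) :
    ∑ e, exp (t * sampleSum x A e) ≤ Fintype.card (Equiv.Perm ι) * exp ((b - a) ^ 2 / 8 * t ^ 2 *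
      #Aᶜ ^ 2 * ∑ k ∈ Ico #Aᶜ (Fintype.card ι), 1 / (k : ℝ) ^ 2) := by
  induction A using Finset.induction_on generalizing t with
  | empty => simp [sampleSum]
  | insert p A hp ih =>
    have hK : #Aᶜ = #(insert p A)ᶜ + 1 := by
      rw [compl_insert, card_erase_add_one (mem_compl.mpr hp)]
    set K := #(insert p A)ᶜ
    have hK1 : (1 : ℝ) ≤ K := by exact_mod_cast hA.card_pos
    have hKN : K < Fintype.card ι := by rw [← Nat.add_one_le_iff, ← hK]; exact card_le_univ _
    have hIco : Ico K (Fintype.card ι) = insert K (Ico (K + 1) (Fintype.card ι)) :=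
      (insert_Ico_add_one_left_eq_Ico hKN).symm
    calc _ ≤ exp ((b - a) ^ 2 / 8 * t ^ 2) * ∑ e, exp (t * (1 - 1 / #Aᶜ) * sampleSum x A e) :=
          sum_exp_sampleSum_insert_le hx hab hp t
      _ ≤ exp ((b - a) ^ 2 / 8 * t ^ 2) * (Fintype.card (Equiv.Perm ι) *
            exp ((b - a) ^ 2 / 8 * (t * (1 - 1 / #Aᶜ)) ^ 2 * #Aᶜ ^ 2 *
              ∑ k ∈ Ico #Aᶜ (Fintype.card ι), 1 / (k : ℝ) ^ 2)) := by
          gcongr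
          exact ih ⟨p, mem_compl.mpr hp⟩ _
      _ = _ := by
          rw [hIco, sum_insert (by simp), hK, mul_left_comm, ← exp_add]
          congr 2
          push_cast
          field_simp
          ring

end SamplingWithoutReplacement

lemma integral_comp_of_samplesWithoutReplacement {Ω : Type*} [MeasurableSpace Ω] {P : Measure Ω}
    {N : ℕ} {x : Fin N → ℝ} {X : ℕ → Ω → ℝ} (hX : samplesWithoutReplacement P N x X)
    (hXm : ∀ i, Measurable (X i)) {g : (Fin N → ℝ) → ℝ} (hg : Measurable g) :
    ∫ ω, g (fun i ↦ X i ω) ∂P = (N ! : ℝ)⁻¹ * ∑ e : Equiv.Perm (Fin N), g (fun i ↦ x (e i)) := by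
  have hmap : Measurable fun ω (i : Fin N) ↦ X i ω := measurable_pi_lambda _ fun i ↦ hXm i
  rw [← integral_map hmap.aemeasurable hg.aestronglyMeasurable, hX, integral_smul_measure,
    integral_finsetSum_measure fun e _ ↦ integrable_dirac (by simp)]
  simp [integral_dirac]

lemma integral_exp_mul_sum_range_of_samplesWithoutReplacement {Ω : Type*} [MeasurableSpace Ω]
    {P : Measure Ω} {N n : ℕ} (hn : n < N) {x : Fin N → ℝ} {X : ℕ → Ω → ℝ}
    (hX : samplesWithoutReplacement P N x X) (hXm : ∀ i, Measurable (X i)) (l μ : ℝ) :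
    ∫ ω, exp (l * ∑ t ∈ range n, (X t ω - μ)) ∂P
      = (N ! : ℝ)⁻¹ * ∑ e, exp (l * sampleSum (fun i ↦ x i - μ) (Iio ⟨n, hn⟩) e) := by
  have hsum (v : ℕ → ℝ) : ∑ t ∈ range n, v t = ∑ j ∈ Iio (⟨n, hn⟩ : Fin N), v j := by
    have h := sum_map (Iio (⟨n, hn⟩ : Fin N)) Fin.valEmbedding v
    rwa [Fin.map_valEmbedding_Iio, Nat.Iio_eq_range] at h
  simp_rw [hsum]
  exact integral_comp_of_samplesWithoutReplacement
    (g := fun v ↦ exp (l * ∑ j ∈ Iio (⟨n, hn⟩ : Fin N), (v j - μ))) hX hXm (by fun_prop)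

theorem serfling_mgf_bound_general
    {Ω : Type*} [MeasurableSpace Ω] (P : Measure Ω) [IsProbabilityMeasure P]
    (N n : ℕ) (hn : n < N) (x : Fin N → ℝ)
    (X : ℕ → Ω → ℝ) (hXm : ∀ i, Measurable (X i))
    (hX : samplesWithoutReplacement P N x X)
    (a b : ℝ) (ha : IsLeast (Set.range x) a) (hb : IsGreatest (Set.range x) b)
    (μ : ℝ) (hμ : μ = (∑ i, x i) / N)
    (l : ℝ) :
    Real.log (∫ ω, Real.exp (l * ∑ t ∈ Finset.range n, (X t ω - μ)) ∂P) ≤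
      (b - a) ^ 2 / 8 * l ^ 2 * n * (1 - ((n : ℝ) - 1) / N) := by
  have hcentered : ∑ i, (x i - μ) = 0 := by
    have hN : (N : ℝ) ≠ 0 := Nat.cast_ne_zero.mpr (by omega)
    simp [sum_sub_distrib, hμ, mul_div_cancel₀ _ hN]
  have hrange (i : Fin N) : x i - μ ∈ Set.Icc (a - μ) (b - μ) :=
    ⟨by linarith [ha.2 ⟨i, rfl⟩], by linarith [hb.2 ⟨i, rfl⟩]⟩
  have hmgf := integral_exp_mul_sum_range_of_samplesWithoutReplacement hn hX hXm l μ
  have hpos : 0 < ∫ ω, exp (l * ∑ t ∈ range n, (X t ω - μ)) ∂P := by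
    rw [hmgf]; positivity
  have hbound := sum_exp_sampleSum_le hcentered hrange (A := Iio ⟨n, hn⟩) ⟨⟨n, hn⟩, by simp⟩ l
  rw [Fintype.card_perm, Fintype.card_fin, ← inv_mul_le_iff₀ (by positivity), ← hmgf,
    sub_sub_sub_cancel_right, show #(Iio (⟨n, hn⟩ : Fin N))ᶜ = N - n by simp [card_compl]]
    at hbound
  calc _ ≤ (b - a) ^ 2 / 8 * l ^ 2 * ((N - n : ℕ) ^ 2 * ∑ k ∈ Ico (N - n) N, 1 / (k : ℝ) ^ 2) := by
        rw [← mul_assoc]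
        exact (log_le_iff_le_exp hpos).mpr hbound
    _ ≤ _ := by
        rw [mul_assoc _ (n : ℝ)]
        exact mul_le_mul_of_nonneg_left (sq_mul_sum_Ico_inv_sq_le hn) (by positivity)

/-- Serfling's moment-generating-function bound:
`log E[exp(λ n Z_n)] ≤ ((b-a)²/8) λ² n (1 - (n-1)/N)`, where `n Z_n = ∑_{t=1}^n (X_t - μ)`. -/
theorem serfling_mgf_bound
    {Ω : Type*} [MeasurableSpace Ω] (P : Measure Ω) [IsProbabilityMeasure P]
    (N n : ℕ) (hN : 2 ≤ N) (hn1 : 1 ≤ n) (hn : n < N) (x : Fin N → ℝ)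
    (X : ℕ → Ω → ℝ) (hXm : ∀ i, Measurable (X i))
    (hX : samplesWithoutReplacement P N x X)
    (a b : ℝ) (ha : IsLeast (Set.range x) a) (hb : IsGreatest (Set.range x) b)
    (μ : ℝ) (hμ : μ = (∑ i, x i) / N)
    (l : ℝ) (hl : 0 < l) :
    Real.log (∫ ω, Real.exp (l * ∑ t ∈ Finset.range n, (X t ω - μ)) ∂P) ≤
      (b - a) ^ 2 / 8 * l ^ 2 * n * (1 - ((n : ℝ) - 1) / N) :=
  serfling_mgf_bound_general P N n hn x X hXm hX a b ha hb μ hμ l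
end

section
/- Let X_1,...,X_N be sampled without replacement from a finite population of N > 1 reals with mean μ, minimum a and maximum b. Then for all ε > 0 and n < N, P(max_{1≤k≤n} (∑_{t=1}^k (X_t − μ))/(N−k) ≥ nε/(N−n)) ≤ exp(−2nε²/((1 − (n−1)/N)(b−a)²)). -/
open MeasureTheory Finset Real
open scoped ENNReal

/-!
Realise the sample as a uniformly random permutation `e` of the population, so that every
probability is a proportion of the `N!` permutations. Given the first `k` draws, the next one is
uniform on the `N - k` remaining elements, whose mean is `μ - S_k / (N - k)` when `S_k` is the
centered sum of the first `k` draws; hence `Z_k = S_k / (N - k)` is a martingale (Serfling).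
By Jensen, `exp (θ Z_k)` is a submartingale, and Doob's argument with the first time `Z_k ≥ u`
bounds the proportion of permutations with `max_{k ≤ n} Z_k ≥ u` by `e^{-θ u} E exp (θ Z_n)`.
Each increment of `Z` is an affine image of the new draw, so Hoeffding's lemma gives
`E exp (θ Z_n) ≤ exp (θ² (b - a)² S / 8)` with `S = ∑_{k < n} (N - k - 1)⁻²`. Serfling's bound
`S ≤ n (N - n + 1) / (N (N - n)²)` and the optimal `θ` give the claim.
-/

open ProbabilityTheory Equiv
open scoped BigOperators Nat Classical

section Averages

variable {ι : Type*}

lemma exp_expect_le_expect_exp {s : Finset ι} (hs : s.Nonempty) (f : ι → ℝ) :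
    exp (𝔼 i ∈ s, f i) ≤ 𝔼 i ∈ s, exp (f i) := by
  have h := convexOn_exp.map_sum_le (t := s) (w := fun _ => (#s : ℝ)⁻¹) (p := f)
    (fun _ _ => by positivity) (by simp [hs.card_ne_zero]) (fun _ _ => Set.mem_univ _)
  simpa [expect_eq_sum_div_card, div_eq_inv_mul, ← mul_sum] using h

lemma integral_uniformOn_finset [MeasurableSpace ι] [MeasurableSingletonClass ι]
    (s : Finset ι) (g : ι → ℝ) :
    ∫ i, g i ∂(uniformOn (s : Set ι)) = 𝔼 i ∈ s, g i := by
  rw [uniformOn, ProbabilityTheory.cond, integral_smul_measure, setIntegral_finset]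
  · simp [expect_eq_sum_div_card, div_eq_inv_mul, mul_sum]
  · rw [← (s : Set ι).biUnion_of_singleton]
    simp [integrableOn_finset_iUnion]

lemma expect_exp_mul_sub_expect_le {s : Finset ι} (hs : s.Nonempty) {y : ι → ℝ} {a b : ℝ}
    (hy : ∀ i ∈ s, y i ∈ Set.Icc a b) (t : ℝ) :
    𝔼 i ∈ s, exp (t * (y i - 𝔼 j ∈ s, y j)) ≤ exp ((b - a) ^ 2 * t ^ 2 / 8) := by
  let _ : MeasurableSpace ι := ⊤
  have := isProbabilityMeasure_uniformOn s.finite_toSet hs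
  have hY : ∀ᵐ i ∂(uniformOn (s : Set ι)), y i ∈ Set.Icc a b :=
    Measure.ae_smul_measure (ae_restrict_of_forall_mem s.measurableSet hy) _
  have h := (hasSubgaussianMGF_of_mem_Icc Measurable.of_discrete.aemeasurable hY).mgf_le t
  rw [mgf, integral_uniformOn_finset, integral_uniformOn_finset] at h
  convert h using 2
  push_cast [coe_nnnorm, Real.norm_eq_abs, div_pow, sq_abs]
  ring

end Averages

section FirstHit

variable {α : Type*} (Y : ℕ → α → ℝ) (u : ℝ)

def IsFirstHit (k : ℕ) (ω : α) : Prop :=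
  u ≤ Y k ω ∧ ∀ j ∈ Ico 1 k, Y j ω < u

lemma exists_isFirstHit {n : ℕ} {ω : α} (h : ∃ k ∈ Icc 1 n, u ≤ Y k ω) :
    ∃ k ∈ Icc 1 n, IsFirstHit Y u k ω := by
  obtain ⟨hk, hu⟩ := Nat.find_spec h
  refine ⟨Nat.find h, hk, hu, fun j hj => not_le.1 fun hj' => ?_⟩
  obtain ⟨hj1, hjk⟩ := mem_Ico.1 hj
  exact Nat.find_min h hjk ⟨mem_Icc.2 ⟨hj1, hjk.le.trans (mem_Icc.1 hk).2⟩, hj'⟩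

lemma IsFirstHit.eq {k k' : ℕ} {ω : α} (hk : IsFirstHit Y u k ω) (hk' : IsFirstHit Y u k' ω)
    (h1k : 1 ≤ k) (h1k' : 1 ≤ k') : k = k' := by
  by_contra hne
  rcases Nat.lt_or_gt_of_ne hne with hlt | hlt
  · exact (hk'.2 k (mem_Ico.2 ⟨h1k, hlt⟩)).not_ge hk.1
  · exact (hk.2 k' (mem_Ico.2 ⟨h1k', hlt⟩)).not_ge hk'.1

lemma sum_ite_isFirstHit_le_one (n : ℕ) (ω : α) :
    ∑ k ∈ Icc 1 n, (if IsFirstHit Y u k ω then 1 else 0 : ℝ) ≤ 1 := by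
  rw [sum_boole, Nat.cast_le_one, card_le_one]
  intro k hk k' hk'
  simp only [mem_filter, mem_Icc] at hk hk'
  exact hk.2.eq Y u hk'.2 hk.1.1 hk'.1.1

end FirstHit

noncomputable section Permutations

variable {N : ℕ}

def DependsOnPrefix {α : Type*} (k : ℕ) (F : Perm (Fin N) → α) : Prop :=
  ∀ e e' : Perm (Fin N), (∀ t : Fin N, (t : ℕ) < k → e t = e' t) → F e = F e'

lemma DependsOnPrefix.mono {α : Type*} {k m : ℕ} {F : Perm (Fin N) → α}
    (hF : DependsOnPrefix k F) (hkm : k ≤ m) : DependsOnPrefix m F :=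
  fun e e' h => hF e e' fun t ht => h t (ht.trans_le hkm)

lemma DependsOnPrefix.apply_mul_swap {α : Type*} {k j : Fin N} {F : Perm (Fin N) → α}
    (hF : DependsOnPrefix k F) (hkj : k ≤ j) (e : Perm (Fin N)) : F (e * swap k j) = F e :=
  hF _ _ fun t ht => by
    rw [Perm.mul_apply, swap_apply_of_ne_of_ne (Fin.ne_of_lt ht) (Fin.ne_of_lt (ht.trans_le hkj))]

/-- The permutations `e * swap k j`, `k ≤ j`, agree with `e` before position `k` and draw each
element not drawn before `k` once at position `k`. So for `F` depending on the first `k + 1`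
draws, `swapMean k F` is the conditional expectation of `F` given the first `k` draws. -/
def swapMean (k : Fin N) (F : Perm (Fin N) → ℝ) (e : Perm (Fin N)) : ℝ :=
  𝔼 j ∈ Ici k, F (e * swap k j)

lemma sum_swapMean (k : Fin N) (F : Perm (Fin N) → ℝ) : ∑ e, swapMean k F e = ∑ e, F e := by
  have hshift (j : Fin N) : ∑ e, F (e * swap k j) = ∑ e, F e :=
    Equiv.sum_comp (Equiv.mulRight (swap k j)) F
  simp only [swapMean]
  rw [← expect_sum_comm]
  simp only [hshift]
  exact expect_const nonempty_Ici _

lemma swapMean_mul_of_dependsOnPrefix {k : Fin N} {G : Perm (Fin N) → ℝ}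
    (hG : DependsOnPrefix k G) (F : Perm (Fin N) → ℝ) (e : Perm (Fin N)) :
    swapMean k (fun e => G e * F e) e = G e * swapMean k F e := by
  rw [swapMean, swapMean, mul_expect]
  exact expect_congr rfl fun j hj => by rw [hG.apply_mul_swap (mem_Ici.1 hj)]

variable (x : Fin N → ℝ) (μ : ℝ)

def centeredSum (k : ℕ) (e : Perm (Fin N)) : ℝ :=
  ∑ t : Fin N with t.val < k, (x (e t) - μ)

/-- `Z_k*` of the paper, for the sample `x (e 0), x (e 1), …`. -/
def selfNormalizedSum (k : ℕ) (e : Perm (Fin N)) : ℝ :=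
  centeredSum x μ k e / (N - k)

lemma dependsOnPrefix_centeredSum (k : ℕ) : DependsOnPrefix k (centeredSum x μ k) :=
  fun e e' h => sum_congr rfl fun t ht => by rw [h t (mem_filter.1 ht).2]

lemma dependsOnPrefix_selfNormalizedSum (k : ℕ) : DependsOnPrefix k (selfNormalizedSum x μ k) :=
  fun e e' h => by
    rw [selfNormalizedSum, selfNormalizedSum, dependsOnPrefix_centeredSum x μ k e e' h]

lemma centeredSum_succ_mul_swap {k j : Fin N} (hkj : k ≤ j) (e : Perm (Fin N)) :
    centeredSum x μ (k + 1 : ℕ) (e * swap k j) = centeredSum x μ k e + (x (e j) - μ) := by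
  have hprefix : univ.filter (fun t : Fin N => t.val < k + 1) =
      insert k (univ.filter fun t : Fin N => t.val < k) := by
    ext t
    simp only [mem_filter, mem_univ, true_and, mem_insert, Fin.ext_iff]
    omega
  rw [centeredSum, hprefix, sum_insert (by simp), add_comm, Perm.mul_apply, swap_apply_left]
  exact congrArg (· + _) ((dependsOnPrefix_centeredSum x μ k).apply_mul_swap hkj e)

lemma sum_Ici_sub_eq_neg_centeredSum (hμ : ∑ i, x i = N * μ) (k : Fin N) (e : Perm (Fin N)) :
    ∑ j ∈ Ici k, (x (e j) - μ) = -centeredSum x μ k e := by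
  have htotal : ∑ t, (x (e t) - μ) = 0 := by
    rw [sum_sub_distrib, Equiv.sum_comp e x, hμ]
    simp
  have hsuffix : univ.filter (fun t : Fin N => ¬ t.val < k) = Ici k := by
    ext t
    simp only [mem_filter, mem_univ, true_and, mem_Ici, Fin.le_def, not_lt]
  rw [← hsuffix, centeredSum, eq_neg_iff_add_eq_zero, add_comm, sum_filter_add_sum_filter_not,
    htotal]


lemma selfNormalizedSum_succ_mul_swap (hμ : ∑ i, x i = N * μ) {k j : Fin N} (hk : (k : ℕ) + 1 < N)
    (hkj : k ≤ j) (e : Perm (Fin N)) :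
    selfNormalizedSum x μ (k + 1 : ℕ) (e * swap k j) =
      selfNormalizedSum x μ k e + (x (e j) - 𝔼 i ∈ Ici k, x (e i)) / (N - k - 1) := by
  have hk' : (k : ℝ) + 1 < N := by exact_mod_cast hk
  have hmean : 𝔼 i ∈ Ici k, x (e i) = μ - centeredSum x μ k e / (N - k) := by
    have h := expect_sub_distrib (Ici k) (fun i => x (e i)) (fun _ => μ)
    rw [expect_const nonempty_Ici, expect_eq_sum_div_card, sum_Ici_sub_eq_neg_centeredSum x μ hμ,
      Fin.card_Ici, Nat.cast_sub k.is_lt.le, neg_div] at h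
    linarith
  rw [selfNormalizedSum, selfNormalizedSum, centeredSum_succ_mul_swap x μ hkj, hmean]
  have h1 : (N : ℝ) - k ≠ 0 := by linarith
  have h2 : (N : ℝ) - k - 1 ≠ 0 := by linarith
  push_cast
  rw [sub_add_eq_sub_sub]
  field_simp
  ring

lemma swapMean_selfNormalizedSum_succ (hμ : ∑ i, x i = N * μ) {k : Fin N} (hk : (k : ℕ) + 1 < N)
    (e : Perm (Fin N)) :
    swapMean k (selfNormalizedSum x μ (k + 1 : ℕ)) e = selfNormalizedSum x μ k e := by
  rw [swapMean, expect_congr rfl fun j hj =>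
      selfNormalizedSum_succ_mul_swap x μ hμ hk (mem_Ici.1 hj) e,
    expect_add_distrib, expect_const nonempty_Ici (selfNormalizedSum x μ k e),
    ← expect_div, expect_sub_distrib, expect_const nonempty_Ici, sub_self, zero_div,
    add_zero]

lemma sum_mul_exp_selfNormalizedSum_le_succ (hμ : ∑ i, x i = N * μ) {k : Fin N}
    (hk : (k : ℕ) + 1 < N) {G : Perm (Fin N) → ℝ} (hG0 : 0 ≤ G) (hG : DependsOnPrefix k G)
    (θ : ℝ) :
    ∑ e, G e * exp (θ * selfNormalizedSum x μ k e) ≤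
      ∑ e, G e * exp (θ * selfNormalizedSum x μ (k + 1 : ℕ) e) := by
  rw [← sum_swapMean k fun e => G e * exp (θ * selfNormalizedSum x μ (k + 1 : ℕ) e)]
  refine sum_le_sum fun e _ => ?_
  rw [swapMean_mul_of_dependsOnPrefix hG]
  refine mul_le_mul_of_nonneg_left ?_ (hG0 e)
  calc exp (θ * selfNormalizedSum x μ k e)
      = exp (𝔼 j ∈ Ici k, θ * selfNormalizedSum x μ (k + 1 : ℕ) (e * swap k j)) := by
        rw [← mul_expect, ← swapMean, swapMean_selfNormalizedSum_succ x μ hμ hk]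
    _ ≤ _ := exp_expect_le_expect_exp nonempty_Ici _

lemma sum_mul_exp_selfNormalizedSum_le (hμ : ∑ i, x i = N * μ) {m n : ℕ} (hmn : m ≤ n)
    (hn : n < N) {G : Perm (Fin N) → ℝ} (hG0 : 0 ≤ G) (hG : DependsOnPrefix m G) (θ : ℝ) :
    ∑ e, G e * exp (θ * selfNormalizedSum x μ m e) ≤
      ∑ e, G e * exp (θ * selfNormalizedSum x μ n e) := by
  induction n, hmn using Nat.le_induction with
  | base => exact le_rfl
  | succ n hmn ih =>
    exact (ih (by omega)).trans <|
      sum_mul_exp_selfNormalizedSum_le_succ x μ hμ (k := ⟨n, by omega⟩) hn hG0 (hG.mono hmn) θ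

lemma sum_exp_selfNormalizedSum_succ_le (hμ : ∑ i, x i = N * μ) {a b : ℝ}
    (hx : ∀ i, x i ∈ Set.Icc a b) {k : Fin N} (hk : (k : ℕ) + 1 < N) (θ : ℝ) :
    ∑ e, exp (θ * selfNormalizedSum x μ (k + 1 : ℕ) e) ≤
      exp ((b - a) ^ 2 * θ ^ 2 / 8 * (1 / ((N : ℝ) - k - 1) ^ 2)) *
        ∑ e, exp (θ * selfNormalizedSum x μ k e) := by
  rw [← sum_swapMean k, mul_sum]
  refine sum_le_sum fun e _ => ?_
  have hsplit : ∀ j ∈ Ici k, exp (θ * selfNormalizedSum x μ (k + 1 : ℕ) (e * swap k j)) =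
      exp (θ * selfNormalizedSum x μ k e) *
        exp (θ / (N - k - 1) * (x (e j) - 𝔼 i ∈ Ici k, x (e i))) := fun j hj => by
    rw [selfNormalizedSum_succ_mul_swap x μ hμ hk (mem_Ici.1 hj), ← exp_add]
    congr 1
    ring
  rw [swapMean, expect_congr rfl hsplit, ← mul_expect, mul_comm]
  gcongr
  calc _ ≤ exp ((b - a) ^ 2 * (θ / (N - k - 1)) ^ 2 / 8) :=
        expect_exp_mul_sub_expect_le nonempty_Ici (fun j _ => hx (e j)) _
    _ = _ := by
      generalize (N : ℝ) - k - 1 = D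
      congr 1
      ring

lemma sum_exp_selfNormalizedSum_le (hμ : ∑ i, x i = N * μ) {a b : ℝ}
    (hx : ∀ i, x i ∈ Set.Icc a b) {n : ℕ} (hn : n < N) (θ : ℝ) :
    ∑ e, exp (θ * selfNormalizedSum x μ n e) ≤
      N ! * exp ((b - a) ^ 2 * θ ^ 2 / 8 * ∑ i ∈ range n, 1 / ((N : ℝ) - i - 1) ^ 2) := by
  induction n with
  | zero => simp [selfNormalizedSum, centeredSum, Fintype.card_perm]
  | succ n ih =>
    calc _ ≤ exp ((b - a) ^ 2 * θ ^ 2 / 8 * (1 / ((N : ℝ) - n - 1) ^ 2)) *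
          ∑ e, exp (θ * selfNormalizedSum x μ n e) :=
          sum_exp_selfNormalizedSum_succ_le x μ hμ hx (k := ⟨n, by omega⟩) hn θ
      _ ≤ exp ((b - a) ^ 2 * θ ^ 2 / 8 * (1 / ((N : ℝ) - n - 1) ^ 2)) *
          (N ! * exp ((b - a) ^ 2 * θ ^ 2 / 8 * ∑ i ∈ range n, 1 / ((N : ℝ) - i - 1) ^ 2)) := by
          gcongr
          exact ih (by omega)
      _ = _ := by
          rw [sum_range_succ, mul_add, exp_add]
          ring

lemma dependsOnPrefix_isFirstHit (u : ℝ) (k : ℕ) :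
    DependsOnPrefix k fun e => if IsFirstHit (selfNormalizedSum x μ) u k e then (1 : ℝ) else 0 :=
  fun e e' h => by
    have hZ {j : ℕ} (hj : j ≤ k) : selfNormalizedSum x μ j e = selfNormalizedSum x μ j e' :=
      (dependsOnPrefix_selfNormalizedSum x μ j).mono hj e e' h
    refine if_congr ?_ rfl rfl
    exact and_congr (by rw [hZ le_rfl]) (forall₂_congr fun j hj => by rw [hZ (mem_Ico.1 hj).2.le])

lemma card_exists_le_selfNormalizedSum_mul_exp_le (hμ : ∑ i, x i = N * μ) {n : ℕ} (hn : n < N)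
    {θ : ℝ} (hθ : 0 ≤ θ) (u : ℝ) :
    #{e | ∃ k ∈ Icc 1 n, u ≤ selfNormalizedSum x μ k e} * exp (θ * u) ≤
      ∑ e, exp (θ * selfNormalizedSum x μ n e) := by
  set B : ℕ → Perm (Fin N) → ℝ := fun k e =>
    if IsFirstHit (selfNormalizedSum x μ) u k e then 1 else 0
  have hB0 (k : ℕ) : 0 ≤ B k := fun e => by positivity
  have hfirst (e : Perm (Fin N)) (he : ∃ k ∈ Icc 1 n, u ≤ selfNormalizedSum x μ k e) :
      exp (θ * u) ≤ ∑ k ∈ Icc 1 n, B k e * exp (θ * selfNormalizedSum x μ k e) := by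
    obtain ⟨k, hk, hhit⟩ := exists_isFirstHit _ u he
    calc exp (θ * u) ≤ B k e * exp (θ * selfNormalizedSum x μ k e) := by
          rw [show B k e = 1 from if_pos hhit, one_mul]
          exact exp_le_exp.2 (mul_le_mul_of_nonneg_left hhit.1 hθ)
      _ ≤ _ := single_le_sum (f := fun k => B k e * exp (θ * selfNormalizedSum x μ k e))
          (fun k _ => mul_nonneg (hB0 k e) (exp_pos _).le) hk
  calc _ = ∑ e with ∃ k ∈ Icc 1 n, u ≤ selfNormalizedSum x μ k e, exp (θ * u) := by
        rw [sum_const, nsmul_eq_mul]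
    _ ≤ ∑ e, ∑ k ∈ Icc 1 n, B k e * exp (θ * selfNormalizedSum x μ k e) := by
        rw [sum_filter]
        refine sum_le_sum fun e _ => ?_
        split_ifs with he
        · exact hfirst e he
        · exact sum_nonneg fun k _ => mul_nonneg (hB0 k e) (exp_pos _).le
    _ = ∑ k ∈ Icc 1 n, ∑ e, B k e * exp (θ * selfNormalizedSum x μ k e) := sum_comm
    _ ≤ ∑ k ∈ Icc 1 n, ∑ e, B k e * exp (θ * selfNormalizedSum x μ n e) :=
        sum_le_sum fun k hk => sum_mul_exp_selfNormalizedSum_le x μ hμ (mem_Icc.1 hk).2 hn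
          (hB0 k) (dependsOnPrefix_isFirstHit x μ u k) θ
    _ = ∑ e, (∑ k ∈ Icc 1 n, B k e) * exp (θ * selfNormalizedSum x μ n e) := by
        rw [sum_comm]
        simp only [sum_mul]
    _ ≤ ∑ e, exp (θ * selfNormalizedSum x μ n e) :=
        sum_le_sum fun e _ => mul_le_of_le_one_left (exp_pos _).le
          (sum_ite_isFirstHit_le_one _ u n e)

end Permutations

lemma sum_range_one_div_sub_sq_le {N n : ℕ} (hn : n < N) :
    ∑ i ∈ range n, 1 / ((N : ℝ) - i - 1) ^ 2 ≤ n * ((N : ℝ) - n + 1) / (N * ((N : ℝ) - n) ^ 2) := by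
  induction n with
  | zero => simp
  | succ n ih =>
    rw [sum_range_succ]
    refine (add_le_add_left (ih (by omega)) _).trans ?_
    have hm : (2 : ℝ) ≤ N - n := by
      have : ((n + 2 : ℕ) : ℝ) ≤ N := by exact_mod_cast hn
      push_cast at this
      linarith
    have hN : (N : ℝ) = n + (N - n) := by ring
    generalize (N : ℝ) - n = m at hm hN ⊢
    have hm1 : 0 < m - 1 := by linarith
    have hn0 : (0 : ℝ) ≤ n := n.cast_nonneg
    have hkey : n * (m + 1) * (m - 1) ^ 2 + (n + m) * m ^ 2 ≤ (n + 1) * m ^ 3 := by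
      nlinarith [mul_nonneg hn0 hm1.le]
    have hpos : 0 < (n + m) * (m - 1) ^ 2 := by positivity
    push_cast
    rw [hN, show (n : ℝ) + m - (n + 1) = m - 1 by ring,
      div_add_div _ _ (by positivity) (by positivity), div_le_div_iff₀ (by positivity) hpos]
    nlinarith [mul_le_mul_of_nonneg_right hkey hpos.le]

lemma sum_range_one_div_sub_sq_pos {N n : ℕ} (hn1 : 1 ≤ n) (hn : n < N) :
    0 < ∑ i ∈ range n, 1 / ((N : ℝ) - i - 1) ^ 2 := by
  refine sum_pos (fun i hi => one_div_pos.2 (pow_pos ?_ 2)) (nonempty_range_iff.2 (by omega))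
  have : (i : ℝ) + 1 < N := by
    have := mem_range.1 hi
    exact_mod_cast (by omega : i + 1 < N)
  linarith

theorem card_exists_le_selfNormalizedSum_le {N n : ℕ} (x : Fin N → ℝ) (μ : ℝ)
    (hμ : ∑ i, x i = N * μ) {a b : ℝ} (hx : ∀ i, x i ∈ Set.Icc a b) (hab : a < b) (hn1 : 1 ≤ n)
    (hn : n < N) {u : ℝ} (hu : 0 ≤ u) :
    (#{e | ∃ k ∈ Icc 1 n, u ≤ selfNormalizedSum x μ k e} : ℝ) ≤
      N ! * exp (-(2 * u ^ 2) / ((b - a) ^ 2 * ∑ i ∈ range n, 1 / ((N : ℝ) - i - 1) ^ 2)) := by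
  set S : ℝ := ∑ i ∈ range n, 1 / ((N : ℝ) - i - 1) ^ 2 with hS_def
  have hQ : 0 < (b - a) ^ 2 * S :=
    mul_pos (pow_pos (sub_pos.2 hab) 2) (sum_range_one_div_sub_sq_pos hn1 hn)
  -- minimises `θ ^ 2 * Q / 8 - θ * u`, where `Q = (b - a) ^ 2 * S`
  set θ := 4 * u / ((b - a) ^ 2 * S)
  have hchernoff := (card_exists_le_selfNormalizedSum_mul_exp_le x μ hμ hn (θ := θ)
    (by positivity) u).trans (sum_exp_selfNormalizedSum_le x μ hμ hx hn θ)
  have hexponent : (b - a) ^ 2 * θ ^ 2 / 8 * S - θ * u = -(2 * u ^ 2) / ((b - a) ^ 2 * S) := by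
    simp only [θ]
    field_simp
    ring
  rwa [← le_div_iff₀ (exp_pos _), mul_div_assoc, ← exp_sub, ← hS_def, hexponent] at hchernoff

lemma hoeffding_serfling_exponent_le {N n : ℕ} (hn1 : 1 ≤ n) (hn : n < N) {c : ℝ} (hc : 0 < c)
    (ε : ℝ) :
    -(2 * (n * ε / (N - n)) ^ 2) / (c * ∑ i ∈ range n, 1 / ((N : ℝ) - i - 1) ^ 2) ≤
      -(2 * n * ε ^ 2) / ((1 - (n - 1) / N) * c) := by
  have hNn : (0 : ℝ) < N - n := sub_pos.2 (by exact_mod_cast hn)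
  have hN : (0 : ℝ) < N := by linarith [(n.cast_nonneg : (0 : ℝ) ≤ n)]
  have hc' : 1 - ((n : ℝ) - 1) / N = (N - n + 1) / N := by
    field_simp
    ring
  have hn0 : (0 : ℝ) < n := by exact_mod_cast hn1
  rw [neg_div, neg_div, neg_le_neg_iff, hc']
  calc 2 * n * ε ^ 2 / ((N - n + 1) / N * c)
      = 2 * (n * ε / (N - n)) ^ 2 / (c * (n * (N - n + 1) / (N * (N - n) ^ 2))) := by
        field_simp
    _ ≤ 2 * (n * ε / (N - n)) ^ 2 / (c * ∑ i ∈ range n, 1 / ((N : ℝ) - i - 1) ^ 2) :=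
        div_le_div_of_nonneg_left (by positivity) (mul_pos hc (sum_range_one_div_sub_sq_pos hn1 hn))
          (mul_le_mul_of_nonneg_left (sum_range_one_div_sub_sq_le hn) hc.le)

lemma sum_range_eq_sum_filter_val_lt {M : Type*} [AddCommMonoid M] {N k : ℕ} (hk : k ≤ N)
    (g : ℕ → M) : ∑ t ∈ range k, g t = ∑ t : Fin N with t.val < k, g t := by
  rw [sum_filter, Fin.sum_univ_eq_sum_range (fun t => if t < k then g t else 0), ← sum_filter]
  congr 1
  ext t
  simp only [mem_range, mem_filter]
  omega

lemma samplesWithoutReplacement.measure_preimage_le_card_div {Ω : Type*} [MeasurableSpace Ω]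
    {P : Measure Ω} {N : ℕ} {x : Fin N → ℝ} {X : ℕ → Ω → ℝ}
    (hX : samplesWithoutReplacement P N x X) (hXm : ∀ i, Measurable (X i))
    (T : Set (Fin N → ℝ)) :
    P ((fun ω (i : Fin N) => X i ω) ⁻¹' T) ≤
      ENNReal.ofReal (#{e : Perm (Fin N) | (fun i => x (e i)) ∈ T} / N !) := by
  have hsample : Measurable fun ω (i : Fin N) => X i ω := measurable_pi_lambda _ fun i => hXm i
  refine (Measure.le_map_apply hsample.aemeasurable T).trans_eq ?_
  rw [hX, Measure.smul_apply, Measure.coe_finsetSum, Finset.sum_apply]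
  simp only [Measure.dirac_apply, Set.indicator_apply, Pi.one_apply]
  rw [sum_boole, smul_eq_mul, ENNReal.ofReal_div_of_pos (by positivity), ENNReal.ofReal_natCast,
    ENNReal.ofReal_natCast, ENNReal.div_eq_inv_mul]

lemma samplesWithoutReplacement.measure_exists_le_le_card_div {Ω : Type*} [MeasurableSpace Ω]
    {P : Measure Ω} {N : ℕ} {x : Fin N → ℝ} {X : ℕ → Ω → ℝ}
    (hX : samplesWithoutReplacement P N x X) (hXm : ∀ i, Measurable (X i)) {n : ℕ} (hn : n < N)
    (μ u : ℝ) :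
    P {ω | ∃ k ∈ Icc 1 n, u ≤ (∑ t ∈ range k, (X t ω - μ)) / (N - k)} ≤
      ENNReal.ofReal (#{e | ∃ k ∈ Icc 1 n, u ≤ selfNormalizedSum x μ k e} / N !) := by
  let T : Set (Fin N → ℝ) :=
    {f | ∃ k ∈ Icc 1 n, u ≤ (∑ t : Fin N with t.val < k, (f t - μ)) / (N - k)}
  refine le_trans (measure_mono ?_) (hX.measure_preimage_le_card_div hXm T)
  rintro ω ⟨k, hk, hu⟩
  refine ⟨k, hk, ?_⟩
  rwa [sum_range_eq_sum_filter_val_lt ((mem_Icc.1 hk).2.trans hn.le)] at hu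

theorem hoeffding_serfling_second_general
    {Ω : Type*} [MeasurableSpace Ω] (P : Measure Ω) [IsProbabilityMeasure P]
    (N n : ℕ) (hn1 : 1 ≤ n) (hn : n < N) (x : Fin N → ℝ)
    (X : ℕ → Ω → ℝ) (hXm : ∀ i, Measurable (X i))
    (hX : samplesWithoutReplacement P N x X)
    (a b : ℝ) (ha : IsLeast (Set.range x) a) (hb : IsGreatest (Set.range x) b)
    (μ : ℝ) (hμ : μ = (∑ i, x i) / N)
    (ε : ℝ) (hε : 0 < ε) :
    P {ω | (Finset.Icc 1 n).sup' (Finset.nonempty_Icc.2 hn1)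
          (fun k => (∑ t ∈ Finset.range k, (X t ω - μ)) / ((N : ℝ) - k)) ≥
          (n : ℝ) * ε / ((N : ℝ) - n)} ≤
      ENNReal.ofReal (Real.exp (-(2 * n * ε ^ 2) /
        ((1 - ((n : ℝ) - 1) / N) * (b - a) ^ 2))) := by
  have hx (i : Fin N) : x i ∈ Set.Icc a b := ⟨ha.2 ⟨i, rfl⟩, hb.2 ⟨i, rfl⟩⟩
  have hab : a ≤ b := (hx ⟨0, by omega⟩).1.trans (hx ⟨0, by omega⟩).2
  obtain rfl | hab := hab.eq_or_lt
  · -- the bound is `exp (_ / 0) = 1`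
    simpa using prob_le_one
  have hμ' : ∑ i, x i = N * μ := by
    rw [hμ, mul_div_cancel₀]
    exact_mod_cast (by omega : N ≠ 0)
  simp only [ge_iff_le, le_sup'_iff]
  refine (hX.measure_exists_le_le_card_div hXm hn μ _).trans ?_
  have hu : 0 ≤ n * ε / ((N : ℝ) - n) :=
    div_nonneg (by positivity) (sub_nonneg.2 (by exact_mod_cast hn.le))
  refine ENNReal.ofReal_le_ofReal <| (div_le_iff₀' (by positivity)).2 <|
    (card_exists_le_selfNormalizedSum_le x μ hμ' hx hab hn1 hn hu).trans <|
    mul_le_mul_of_nonneg_left (exp_le_exp.2 ?_) (by positivity)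
  exact hoeffding_serfling_exponent_le hn1 hn (pow_pos (sub_pos.2 hab) 2) ε

/-- Hoeffding–Serfling inequality, second part (Theorem 1 of Bardenet–Maillard). -/
theorem hoeffding_serfling_second
    {Ω : Type*} [MeasurableSpace Ω] (P : Measure Ω) [IsProbabilityMeasure P]
    (N n : ℕ) (hN : 1 < N) (hn1 : 1 ≤ n) (hn : n < N) (x : Fin N → ℝ)
    (X : ℕ → Ω → ℝ) (hXm : ∀ i, Measurable (X i))
    (hX : samplesWithoutReplacement P N x X)
    (a b : ℝ) (ha : IsLeast (Set.range x) a) (hb : IsGreatest (Set.range x) b)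
    (μ : ℝ) (hμ : μ = (∑ i, x i) / N)
    (ε : ℝ) (hε : 0 < ε) :
    P {ω | (Finset.Icc 1 n).sup' (Finset.nonempty_Icc.2 hn1)
          (fun k => (∑ t ∈ Finset.range k, (X t ω - μ)) / ((N : ℝ) - k)) ≥
          (n : ℝ) * ε / ((N : ℝ) - n)} ≤
      ENNReal.ofReal (Real.exp (-(2 * n * ε ^ 2) /
        ((1 - ((n : ℝ) - 1) / N) * (b - a) ^ 2))) :=
  hoeffding_serfling_second_general P N n hn1 hn x X hXm hX a b ha hb μ hμ ε hε
end

section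
/- Let X_1,...,X_n be sampled without replacement from a finite population of N ≥ 2 reals with mean μ, range [a,b]. Define ρ_n = 1 − (n−1)/N if n ≤ N/2 and ρ_n = (1 − n/N)(1 + 1/n) if n > N/2. Then for all n ≤ N and δ ∈ (0,1], with probability at least 1 − δ, (1/n)∑_{t=1}^n (X_t − μ) ≤ (b−a)√(ρ_n log(1/δ)/(2n)). -/
open MeasureTheory ProbabilityTheory Finset Real
open scoped ENNReal NNReal

section FiniteAverage

variable {ι α : Type*} [MeasurableSpace α] (s : Finset ι) (y : ι → α)

theorem integral_smul_finsetSum_dirac [MeasurableSingletonClass α] (c : ℝ≥0∞) (f : α → ℝ) :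
    ∫ z, f z ∂(c • ∑ i ∈ s, Measure.dirac (y i)) = c.toReal * ∑ i ∈ s, f (y i) := by
  rw [integral_smul_measure, integral_finsetSum_measure
    (fun i _ => integrable_dirac (by simp)), smul_eq_mul]
  simp only [integral_dirac]

theorem integrable_smul_finsetSum_dirac [MeasurableSingletonClass α] {c : ℝ≥0∞} (hc : c ≠ ∞)
    (f : α → ℝ) :
    Integrable f (c • ∑ i ∈ s, Measure.dirac (y i)) :=
  (integrable_finsetSum_measure.2 fun i _ => integrable_dirac (by simp)).smul_measure hc

theorem isProbabilityMeasure_inv_card_smul_finsetSum_dirac (hs : s.Nonempty) :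
    IsProbabilityMeasure ((#s : ℝ≥0∞)⁻¹ • ∑ i ∈ s, Measure.dirac (y i)) := by
  constructor
  simpa using ENNReal.inv_mul_cancel (by simpa using hs.card_pos.ne') (ENNReal.natCast_ne_top _)

theorem hasSubgaussianMGF_inv_card_smul_finsetSum_dirac [MeasurableSingletonClass α]
    (hs : s.Nonempty) {Y : α → ℝ} {c : ℝ≥0}
    (h : ∀ t, ∑ i ∈ s, exp (t * Y (y i)) ≤ #s * exp (c * t ^ 2 / 2)) :
    HasSubgaussianMGF Y c ((#s : ℝ≥0∞)⁻¹ • ∑ i ∈ s, Measure.dirac (y i)) := by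
  have hc : (#s : ℝ≥0∞)⁻¹ ≠ ∞ := by simpa using hs.ne_empty
  refine ⟨fun t => integrable_smul_finsetSum_dirac s y hc _, fun t => ?_⟩
  have hcard : (0 : ℝ) < #s := by exact_mod_cast hs.card_pos
  rw [mgf, integral_smul_finsetSum_dirac s y, ENNReal.toReal_inv, ENNReal.toReal_natCast,
    inv_mul_le_iff₀ hcard]
  exact h t

end FiniteAverage

theorem sum_exp_mul_sub_average_le {ι : Type*} (s : Finset ι) (v : ι → ℝ) {a b : ℝ}
    (hv : ∀ i ∈ s, v i ∈ Set.Icc a b) (t : ℝ) :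
    ∑ i ∈ s, exp (t * (v i - (∑ j ∈ s, v j) / #s)) ≤ #s * exp (t ^ 2 * (b - a) ^ 2 / 8) := by
  rcases s.eq_empty_or_nonempty with rfl | hs
  · simp
  set ν : Measure ℝ := (#s : ℝ≥0∞)⁻¹ • ∑ i ∈ s, Measure.dirac (v i)
  have := isProbabilityMeasure_inv_card_smul_finsetSum_dirac s v hs
  have hcard : (0 : ℝ) < #s := by exact_mod_cast hs.card_pos
  have hmean : ν[id] = (∑ j ∈ s, v j) / #s := by
    rw [integral_smul_finsetSum_dirac, ENNReal.toReal_inv, ENNReal.toReal_natCast, inv_mul_eq_div]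
    rfl
  have hae : ∀ᵐ z ∂ν, id z ∈ Set.Icc a b := by
    refine Measure.ae_smul_measure (ae_finsetSum_measure_iff.2 fun i hi => ?_) _
    exact (ae_dirac_iff measurableSet_Icc).2 (hv i hi)
  have hoeffding := (hasSubgaussianMGF_of_mem_Icc aemeasurable_id hae).mgf_le t
  rw [mgf, integral_smul_finsetSum_dirac, ENNReal.toReal_inv, ENNReal.toReal_natCast, hmean,
    inv_mul_le_iff₀ hcard] at hoeffding
  have hparam : (((‖b - a‖₊ / 2) ^ 2 : ℝ≥0) : ℝ) = (b - a) ^ 2 / 4 := by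
    simp only [NNReal.coe_pow, NNReal.coe_div, coe_nnnorm, Real.norm_eq_abs]
    norm_num [div_pow]
  refine hoeffding.trans_eq ?_
  rw [hparam]
  congr 2
  ring

section PrefixSum

variable {N : ℕ}

def prefixSum (k : ℕ) (z : Fin N → ℝ) : ℝ :=
  ∑ i ∈ univ.filter (fun i : Fin N => (i : ℕ) < k), z i

def suffixSum (k : ℕ) (z : Fin N → ℝ) : ℝ :=
  ∑ i ∈ univ.filter (fun i : Fin N => k ≤ (i : ℕ)), z i

theorem prefixSum_add_suffixSum (k : ℕ) (z : Fin N → ℝ) :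
    prefixSum k z + suffixSum k z = ∑ i, z i := by
  simpa [prefixSum, suffixSum, not_lt] using
    sum_filter_add_sum_filter_not univ (fun i : Fin N => (i : ℕ) < k) z

theorem Fin.card_filter_le_val {k : ℕ} (hk : k ≤ N) : #{i : Fin N | k ≤ (i : ℕ)} = N - k := by
  have := card_filter_add_card_filter_not (s := univ) (fun i : Fin N => (i : ℕ) < k)
  simp only [Fin.card_filter_val_lt, card_univ, Fintype.card_fin, not_lt] at this
  omega

theorem prefixSum_zero (z : Fin N → ℝ) : prefixSum 0 z = 0 := by
  simp [prefixSum]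

theorem prefixSum_succ {k : ℕ} (hk : k < N) (z : Fin N → ℝ) :
    prefixSum (k + 1) z = prefixSum k z + z ⟨k, hk⟩ := by
  have : univ.filter (fun i : Fin N => (i : ℕ) < k + 1) =
      insert ⟨k, hk⟩ (univ.filter fun i : Fin N => (i : ℕ) < k) := by
    ext i
    simp only [mem_filter, mem_univ, true_and, mem_insert, Fin.ext_iff]
    omega
  rw [prefixSum, this, sum_insert (by simp), add_comm]
  rfl

theorem prefixSum_comp_of_forall_lt {k : ℕ} {σ : Equiv.Perm (Fin N)}
    (hσ : ∀ i : Fin N, (i : ℕ) < k → σ i = i) (z : Fin N → ℝ) :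
    prefixSum k (z ∘ σ) = prefixSum k z :=
  sum_congr rfl fun i hi => by simp only [Function.comp_apply, hσ i (mem_filter.1 hi).2]

theorem prefixSum_comp_rev (k : ℕ) (z : Fin N → ℝ) :
    prefixSum (N - k) (z ∘ Fin.rev) = suffixSum k z := by
  refine sum_nbij' Fin.rev Fin.rev (fun i hi => ?_) (fun i hi => ?_) (fun i _ => Fin.rev_rev i)
    (fun i _ => Fin.rev_rev i) (fun i _ => rfl)
  · simp only [mem_filter, mem_univ, true_and, Fin.val_rev] at hi ⊢
    omega
  · simp only [mem_filter, mem_univ, true_and, Fin.val_rev] at hi ⊢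
    omega

theorem prefixSum_eq_sum_range {k : ℕ} (hk : k ≤ N) (f : ℕ → ℝ) :
    prefixSum k (fun i : Fin N => f i) = ∑ t ∈ range k, f t := by
  rw [prefixSum, sum_filter, Fin.sum_univ_eq_sum_range (fun t => if t < k then f t else 0),
    ← sum_filter]
  congr 1
  ext t
  simp only [mem_filter, mem_range]
  omega

variable (x : Fin N → ℝ)

theorem sum_perm_prefixSum_apply_eq {M : Type*} [AddCommMonoid M] (F : ℝ → ℝ → M) {k : ℕ}
    {p q : Fin N} (hp : k ≤ (p : ℕ)) (hq : k ≤ (q : ℕ)) :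
    ∑ e : Equiv.Perm (Fin N), F (prefixSum k (x ∘ e)) (x (e p)) =
      ∑ e : Equiv.Perm (Fin N), F (prefixSum k (x ∘ e)) (x (e q)) := by
  have hfix : ∀ i : Fin N, (i : ℕ) < k → Equiv.swap p q i = i := fun i hi =>
    Equiv.swap_apply_of_ne_of_ne (by rintro rfl; omega) (by rintro rfl; omega)
  rw [← Equiv.sum_comp (Equiv.mulRight (Equiv.swap p q))]
  refine sum_congr rfl fun e _ => ?_
  simp only [Equiv.coe_mulRight, Equiv.Perm.coe_mul, Equiv.swap_apply_left, Function.comp_apply]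
  rw [← Function.comp_assoc, prefixSum_comp_of_forall_lt hfix]

theorem card_smul_sum_perm_prefixSum_apply {M : Type*} [AddCommMonoid M] (F : ℝ → ℝ → M)
    {k : ℕ} (hk : k < N) :
    (N - k) • ∑ e : Equiv.Perm (Fin N), F (prefixSum k (x ∘ e)) (x (e ⟨k, hk⟩)) =
      ∑ e : Equiv.Perm (Fin N), ∑ p ∈ univ.filter (fun p : Fin N => k ≤ (p : ℕ)),
        F (prefixSum k (x ∘ e)) (x (e p)) := by
  rw [sum_comm, ← Fin.card_filter_le_val hk.le, ← sum_const]
  exact sum_congr rfl fun p hp =>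
    sum_perm_prefixSum_apply_eq x F le_rfl (mem_filter.1 hp).2

end PrefixSum

theorem one_div_sq_le_mul_sub_one_div {c d : ℝ} (hc : 0 < c) (hcd : c ≤ d) :
    1 / d ^ 2 ≤ (c + 1) / c * (1 / d - 1 / (d + 1)) := by
  have hd : 0 < d := hc.trans_le hcd
  rw [div_sub_div _ _ hd.ne' (by positivity), div_mul_div_comm,
    div_le_div_iff₀ (by positivity) (by positivity)]
  nlinarith [mul_le_mul_of_nonneg_left hcd hd.le]

theorem sum_range_one_div_sq_le {N k : ℕ} (hk : k < N) :
    ∑ j ∈ range k, 1 / ((N : ℝ) - (j + 1)) ^ 2 ≤ (k : ℝ) * (N - k + 1) / (N * (N - k) ^ 2) := by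
  have hN : (0 : ℝ) < N := by exact_mod_cast (Nat.zero_le k).trans_lt hk
  have hc : (0 : ℝ) < N - k := by
    have : (k : ℝ) < N := by exact_mod_cast hk
    linarith
  calc ∑ j ∈ range k, 1 / ((N : ℝ) - (j + 1)) ^ 2
      ≤ ∑ j ∈ range k, ((N - k + 1) / (N - k) *
          (1 / ((N : ℝ) - (j + 1 : ℕ)) - 1 / ((N : ℝ) - j))) := by
        refine sum_le_sum fun j hj => ?_
        have hjk : (j : ℝ) + 1 ≤ k := by exact_mod_cast mem_range.1 hj
        have := one_div_sq_le_mul_sub_one_div hc (d := N - (j + 1)) (by linarith)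
        rw [Nat.cast_add_one, show (N : ℝ) - j = N - (j + 1) + 1 by ring]
        exact this
    _ = (k : ℝ) * (N - k + 1) / (N * (N - k) ^ 2) := by
        rw [← mul_sum, sum_range_sub (fun j => 1 / ((N : ℝ) - j)), Nat.cast_zero, sub_zero]
        field_simp
        ring

section SerflingMartingale

variable {N : ℕ} (x : Fin N → ℝ) {a b μ : ℝ}

theorem suffixSum_comp_perm (hμ : ∑ i, x i = N * μ) (k : ℕ) (e : Equiv.Perm (Fin N)) :
    suffixSum k (x ∘ e) = N * μ - prefixSum k (x ∘ e) := by
  have := prefixSum_add_suffixSum k (x ∘ e)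
  rw [Function.comp_def, Equiv.sum_comp e x] at this
  rw [Function.comp_def]
  linarith

noncomputable def serflingMartingale (μ : ℝ) (k : ℕ) (z : Fin N → ℝ) : ℝ :=
  (prefixSum k z - k * μ) / (N - k)

theorem sum_exp_serflingMartingale_succ_le (hx : ∀ i, x i ∈ Set.Icc a b)
    (hμ : ∑ i, x i = N * μ) {k : ℕ} (hk : k + 1 < N) (t : ℝ) :
    ∑ e : Equiv.Perm (Fin N), exp (t * serflingMartingale μ (k + 1) (x ∘ e)) ≤
      exp ((t / (N - (k + 1))) ^ 2 * (b - a) ^ 2 / 8) *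
        ∑ e : Equiv.Perm (Fin N), exp (t * serflingMartingale μ k (x ∘ e)) := by
  have hkN : k < N := by omega
  have hd : (0 : ℝ) < N - (k + 1) := by
    have : (k : ℝ) + 1 < N := by exact_mod_cast hk
    linarith
  have hm : (0 : ℝ) < N - k := by linarith
  set S := univ.filter (fun p : Fin N => k ≤ (p : ℕ))
  have hS : (#S : ℝ) = N - k := by rw [Fin.card_filter_le_val hkN.le, Nat.cast_sub hkN.le]
  set F : ℝ → ℝ → ℝ := fun P y => exp (t * ((P + y - (k + 1) * μ) / (N - (k + 1))))
  -- The increment of the martingale is the new draw minus the mean of the remaining population.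
  have hF : ∀ (e : Equiv.Perm (Fin N)) (y : ℝ), F (prefixSum k (x ∘ e)) y =
      exp (t * serflingMartingale μ k (x ∘ e)) *
        exp (t / (N - (k + 1)) * (y - suffixSum k (x ∘ e) / #S)) := by
    intro e y
    rw [← exp_add, hS, suffixSum_comp_perm x hμ, serflingMartingale]
    simp only [F]
    congr 1
    field_simp
    ring
  have hsucc : ∀ e : Equiv.Perm (Fin N),
      exp (t * serflingMartingale μ (k + 1) (x ∘ e)) =
        F (prefixSum k (x ∘ e)) (x (e ⟨k, hkN⟩)) := by
    intro e
    rw [serflingMartingale, prefixSum_succ hkN]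
    push_cast
    rfl
  refine le_of_mul_le_mul_left ?_ hm
  calc ((N : ℝ) - k) * ∑ e : Equiv.Perm (Fin N), exp (t * serflingMartingale μ (k + 1) (x ∘ e))
      = ∑ e : Equiv.Perm (Fin N), ∑ p ∈ S, F (prefixSum k (x ∘ e)) (x (e p)) := by
        rw [sum_congr rfl fun e _ => hsucc e, ← card_smul_sum_perm_prefixSum_apply x F hkN,
          nsmul_eq_mul, Nat.cast_sub hkN.le]
    _ = ∑ e : Equiv.Perm (Fin N), exp (t * serflingMartingale μ k (x ∘ e)) *
          ∑ p ∈ S, exp (t / (N - (k + 1)) * (x (e p) - suffixSum k (x ∘ e) / #S)) := by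
        simp only [hF, mul_sum]
    _ ≤ ∑ e : Equiv.Perm (Fin N), exp (t * serflingMartingale μ k (x ∘ e)) *
          (#S * exp ((t / (N - (k + 1))) ^ 2 * (b - a) ^ 2 / 8)) :=
        sum_le_sum fun e _ => mul_le_mul_of_nonneg_left
          (sum_exp_mul_sub_average_le S (x ∘ e) (fun i _ => hx (e i)) _) (exp_pos _).le
    _ = ((N : ℝ) - k) * (exp ((t / (N - (k + 1))) ^ 2 * (b - a) ^ 2 / 8) *
          ∑ e : Equiv.Perm (Fin N), exp (t * serflingMartingale μ k (x ∘ e))) := by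
        rw [hS, mul_sum, mul_sum]
        exact sum_congr rfl fun _ _ => by ring

theorem sum_exp_serflingMartingale_le (hx : ∀ i, x i ∈ Set.Icc a b)
    (hμ : ∑ i, x i = N * μ) {k : ℕ} (hk : k < N) (t : ℝ) :
    ∑ e : Equiv.Perm (Fin N), exp (t * serflingMartingale μ k (x ∘ e)) ≤
      (N.factorial : ℝ) *
        exp (t ^ 2 * (b - a) ^ 2 / 8 * ∑ j ∈ range k, 1 / ((N : ℝ) - (j + 1)) ^ 2) := by
  induction k with
  | zero => simp [serflingMartingale, prefixSum_zero, Fintype.card_perm]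
  | succ k ih =>
    calc ∑ e : Equiv.Perm (Fin N), exp (t * serflingMartingale μ (k + 1) (x ∘ e))
        ≤ exp ((t / (N - (k + 1))) ^ 2 * (b - a) ^ 2 / 8) *
            ∑ e : Equiv.Perm (Fin N), exp (t * serflingMartingale μ k (x ∘ e)) :=
          sum_exp_serflingMartingale_succ_le x hx hμ hk t
      _ ≤ exp ((t / (N - (k + 1))) ^ 2 * (b - a) ^ 2 / 8) *
            ((N.factorial : ℝ) *
              exp (t ^ 2 * (b - a) ^ 2 / 8 * ∑ j ∈ range k, 1 / ((N : ℝ) - (j + 1)) ^ 2)) := by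
          gcongr
          exact ih (by omega)
      _ = _ := by
          rw [mul_left_comm, ← exp_add, sum_range_succ]
          congr 2
          rw [div_pow]
          ring

end SerflingMartingale

noncomputable def serflingFactor (N n : ℕ) : ℝ :=
  if 2 * n ≤ N then 1 - ((n : ℝ) - 1) / N else (1 - (n : ℝ) / N) * (1 + 1 / (n : ℝ))

theorem serflingFactor_nonneg {N n : ℕ} (hn : n ≤ N) : 0 ≤ serflingFactor N n := by
  have hnN : (n : ℝ) ≤ N := by exact_mod_cast hn
  rw [serflingFactor]
  split_ifs
  · exact sub_nonneg.2 (div_le_one_of_le₀ (by linarith) (by positivity))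
  · exact mul_nonneg (sub_nonneg.2 (div_le_one_of_le₀ hnN (by positivity))) (by positivity)

section PrefixDeviation

variable {N : ℕ} (x : Fin N → ℝ) {a b μ : ℝ}

theorem sum_exp_mul_prefixSum_sub_le (hx : ∀ i, x i ∈ Set.Icc a b)
    (hμ : ∑ i, x i = N * μ) {k : ℕ} (hk : k < N) (s : ℝ) :
    ∑ e : Equiv.Perm (Fin N), exp (s * (prefixSum k (x ∘ e) - k * μ)) ≤
      N.factorial * exp (s ^ 2 * (b - a) ^ 2 / 8 * (k * (N - k + 1) / N)) := by
  have hc : (0 : ℝ) < N - k := by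
    have : (k : ℝ) < N := by exact_mod_cast hk
    linarith
  calc ∑ e : Equiv.Perm (Fin N), exp (s * (prefixSum k (x ∘ e) - k * μ))
      = ∑ e : Equiv.Perm (Fin N), exp (s * (N - k) * serflingMartingale μ k (x ∘ e)) := by
        refine sum_congr rfl fun e _ => ?_
        rw [serflingMartingale]
        field_simp
    _ ≤ N.factorial * exp ((s * (N - k)) ^ 2 * (b - a) ^ 2 / 8 *
          ∑ j ∈ range k, 1 / ((N : ℝ) - (j + 1)) ^ 2) :=
        sum_exp_serflingMartingale_le x hx hμ hk _
    _ ≤ N.factorial * exp ((s * (N - k)) ^ 2 * (b - a) ^ 2 / 8 *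
          ((k : ℝ) * (N - k + 1) / (N * (N - k) ^ 2))) := by
        gcongr
        exact sum_range_one_div_sq_le hk
    _ = N.factorial * exp (s ^ 2 * (b - a) ^ 2 / 8 * (k * (N - k + 1) / N)) := by
        congr 2
        field_simp

theorem sum_exp_mul_prefixSum_sub_le_rev (hx : ∀ i, x i ∈ Set.Icc a b)
    (hμ : ∑ i, x i = N * μ) {n : ℕ} (hn : 0 < n) (hnN : n ≤ N) (s : ℝ) :
    ∑ e : Equiv.Perm (Fin N), exp (s * (prefixSum n (x ∘ e) - n * μ)) ≤
      N.factorial * exp (s ^ 2 * (b - a) ^ 2 / 8 * ((N - n) * (n + 1) / N)) := by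
  have hrev : ∀ e : Equiv.Perm (Fin N), prefixSum n (x ∘ e) - n * μ =
      -(prefixSum (N - n) (x ∘ (e * (Fin.revPerm : Equiv.Perm (Fin N)))) - (N - n : ℕ) * μ) := by
    intro e
    rw [show x ∘ ⇑(e * (Fin.revPerm : Equiv.Perm (Fin N))) = (x ∘ e) ∘ Fin.rev from rfl,
      prefixSum_comp_rev, suffixSum_comp_perm x hμ, Nat.cast_sub hnN]
    ring
  calc ∑ e : Equiv.Perm (Fin N), exp (s * (prefixSum n (x ∘ e) - n * μ))
      = ∑ e : Equiv.Perm (Fin N),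
          exp (-s * (prefixSum (N - n) (x ∘ (e * (Fin.revPerm : Equiv.Perm (Fin N)))) -
            (N - n : ℕ) * μ)) := by
        refine sum_congr rfl fun e _ => ?_
        rw [hrev, mul_neg, neg_mul]
    _ = ∑ e : Equiv.Perm (Fin N), exp (-s * (prefixSum (N - n) (x ∘ e) - (N - n : ℕ) * μ)) :=
        Equiv.sum_comp (Equiv.mulRight (Fin.revPerm : Equiv.Perm (Fin N)))
          (fun e => exp (-s * (prefixSum (N - n) (x ∘ e) - (N - n : ℕ) * μ)))
    _ ≤ N.factorial * exp ((-s) ^ 2 * (b - a) ^ 2 / 8 *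
          ((N - n : ℕ) * (N - (N - n : ℕ) + 1) / N)) :=
        sum_exp_mul_prefixSum_sub_le x hx hμ (by omega) _
    _ = N.factorial * exp (s ^ 2 * (b - a) ^ 2 / 8 * ((N - n) * (n + 1) / N)) := by
        rw [Nat.cast_sub hnN]
        congr 2
        ring

theorem sum_exp_mul_prefixSum_sub_le_serflingFactor (hx : ∀ i, x i ∈ Set.Icc a b)
    (hμ : ∑ i, x i = N * μ) {n : ℕ} (hn1 : 1 ≤ n) (hn : n ≤ N) (s : ℝ) :
    ∑ e : Equiv.Perm (Fin N), exp (s * (prefixSum n (x ∘ e) - n * μ)) ≤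
      N.factorial * exp (s ^ 2 * (b - a) ^ 2 / 8 * (n * serflingFactor N n)) := by
  have hN : (0 : ℝ) < N := by exact_mod_cast (show 0 < N by omega)
  rw [serflingFactor]
  split_ifs with h
  · convert sum_exp_mul_prefixSum_sub_le x hx hμ (show n < N by omega) s using 4
    field_simp
    ring
  · convert sum_exp_mul_prefixSum_sub_le_rev x hx hμ hn1 hn s using 4
    have : (n : ℝ) ≠ 0 := by positivity
    field_simp

theorem hasSubgaussianMGF_prefixSum_sub (hx : ∀ i, x i ∈ Set.Icc a b)
    (hμ : ∑ i, x i = N * μ) {n : ℕ} (hn1 : 1 ≤ n) (hn : n ≤ N) :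
    HasSubgaussianMGF (fun z : Fin N → ℝ => prefixSum n z - n * μ)
      (n * serflingFactor N n * (b - a) ^ 2 / 4).toNNReal
      ((N.factorial : ℝ≥0∞)⁻¹ • ∑ e : Equiv.Perm (Fin N), Measure.dirac (fun i => x (e i))) := by
  have hcard : #(univ : Finset (Equiv.Perm (Fin N))) = N.factorial := by
    simp [Fintype.card_perm]
  rw [← hcard]
  refine hasSubgaussianMGF_inv_card_smul_finsetSum_dirac _ _ univ_nonempty fun t => ?_
  have hρ := serflingFactor_nonneg hn
  rw [Real.coe_toNNReal _ (by positivity), hcard]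
  refine (sum_exp_mul_prefixSum_sub_le_serflingFactor x hx hμ hn1 hn t).trans_eq ?_
  congr 2
  ring

end PrefixDeviation

theorem ProbabilityTheory.HasSubgaussianMGF.ofReal_one_sub_le_measure_le_sqrt {Ω : Type*}
    [MeasurableSpace Ω] {P : Measure Ω} [IsProbabilityMeasure P] {Y : Ω → ℝ} {c : ℝ≥0}
    (h : HasSubgaussianMGF Y c P) {δ : ℝ} (hδ0 : 0 < δ) (hδ1 : δ ≤ 1) :
    ENNReal.ofReal (1 - δ) ≤ P {ω | Y ω ≤ √(2 * c * log (1 / δ))} := by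
  rcases eq_or_ne c 0 with rfl | hc
  · have hY : {ω | Y ω ≤ √(2 * (0 : ℝ≥0) * log (1 / δ))} =ᵐ[P] (Set.univ : Set Ω) :=
      ae_eq_univ.2 <| ae_iff.1 <| h.ae_eq_zero_of_hasSubgaussianMGF_zero.mono fun ω hω => by
        simp [hω]
    rw [measure_congr hY, measure_univ]
    exact ENNReal.ofReal_le_one.2 (by linarith)
  set ε := √(2 * c * log (1 / δ))
  have hc : (0 : ℝ) < c := by positivity
  have hL : 0 ≤ log (1 / δ) := log_nonneg (by rw [le_div_iff₀ hδ0]; linarith)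
  have htail : P.real {ω | ε ≤ Y ω} ≤ δ := by
    refine (h.measure_ge_le (sqrt_nonneg _)).trans_eq ?_
    rw [sq_sqrt (by positivity), show -(2 * c * log (1 / δ)) / (2 * c) = log δ by
      rw [one_div, log_inv]; field_simp, exp_log hδ0]
  have hcompl : {ω | ε ≤ Y ω}ᶜ ⊆ {ω | Y ω ≤ ε} := fun ω hω =>
    (not_le.1 (Set.notMem_ofPred_iff.1 hω)).le
  rw [← ofReal_measureReal]
  refine ENNReal.ofReal_le_ofReal ?_
  calc 1 - δ ≤ 1 - P.real {ω | ε ≤ Y ω} := by linarith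
    _ = P.real {ω | ε ≤ Y ω}ᶜ :=
        (probReal_compl_eq_one_sub₀ (nullMeasurableSet_le aemeasurable_const h.aemeasurable)).symm
    _ ≤ P.real {ω | Y ω ≤ ε} := measureReal_mono hcompl

theorem hoeffding_serfling_corollary_general
    {Ω : Type*} [MeasurableSpace Ω] (P : Measure Ω) [IsProbabilityMeasure P]
    (N n : ℕ) (hn1 : 1 ≤ n) (hn : n ≤ N) (x : Fin N → ℝ)
    (X : ℕ → Ω → ℝ) (hXm : ∀ i, Measurable (X i))
    (hX : samplesWithoutReplacement P N x X)
    (a b : ℝ) (ha : IsLeast (Set.range x) a) (hb : IsGreatest (Set.range x) b)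
    (μ : ℝ) (hμ : μ = (∑ i, x i) / N)
    (ρ : ℝ)
    (hρ : ρ = if 2 * n ≤ N then 1 - ((n : ℝ) - 1) / N
              else (1 - (n : ℝ) / N) * (1 + 1 / (n : ℝ)))
    (δ : ℝ) (hδ0 : 0 < δ) (hδ1 : δ ≤ 1) :
    ENNReal.ofReal (1 - δ) ≤
      P {ω | (∑ t ∈ Finset.range n, (X t ω - μ)) / (n : ℝ) ≤
          (b - a) * Real.sqrt (ρ * Real.log (1 / δ) / (2 * n))} := by
  have hn0 : (0 : ℝ) < n := by exact_mod_cast hn1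
  have hN0 : (0 : ℝ) < N := by exact_mod_cast (show 0 < N by omega)
  have hx : ∀ i, x i ∈ Set.Icc a b := fun i => ⟨ha.2 ⟨i, rfl⟩, hb.2 ⟨i, rfl⟩⟩
  have hab : 0 ≤ b - a := by
    obtain ⟨i, -⟩ := ha.1
    linarith [(hx i).1.trans (hx i).2]
  have hsum : ∑ i, x i = N * μ := by
    rw [hμ]
    field_simp
  have hρ0 : 0 ≤ ρ := hρ ▸ serflingFactor_nonneg hn
  have hsample : Measurable fun ω (i : Fin N) => X i ω := measurable_pi_lambda _ fun i => hXm i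
  have hsub := hasSubgaussianMGF_prefixSum_sub x hx hsum hn1 hn
  rw [← hX, ← show ρ = serflingFactor N n from hρ] at hsub
  refine ((hsub.of_map hsample.aemeasurable).ofReal_one_sub_le_measure_le_sqrt hδ0 hδ1).trans
    (measure_mono fun ω hω => ?_)
  have hthreshold : √(2 * (n * ρ * (b - a) ^ 2 / 4).toNNReal * log (1 / δ)) =
      n * ((b - a) * √(ρ * log (1 / δ) / (2 * n))) := by
    rw [Real.coe_toNNReal _ (by positivity), ← mul_assoc,
      ← sqrt_sq (by positivity : 0 ≤ (n : ℝ) * (b - a)), ← sqrt_mul (sq_nonneg _)]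
    congr 1
    field_simp
    ring
  simp only [Set.mem_ofPred_eq, Function.comp_apply, hthreshold,
    prefixSum_eq_sum_range hn (fun t => X t ω)] at hω
  rw [Set.mem_ofPred_eq, sum_sub_distrib, sum_const, card_range, nsmul_eq_mul, div_le_iff₀ hn0]
  linarith

/-- Corollary 1 (inverted Hoeffding–Serfling bound): with probability at least `1 - δ`,
`(1/n) ∑_{t=1}^n (X_t - μ) ≤ (b-a) √(ρ_n log(1/δ)/(2n))`. -/
theorem hoeffding_serfling_corollary
    {Ω : Type*} [MeasurableSpace Ω] (P : Measure Ω) [IsProbabilityMeasure P]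
    (N n : ℕ) (hN : 2 ≤ N) (hn1 : 1 ≤ n) (hn : n ≤ N) (x : Fin N → ℝ)
    (X : ℕ → Ω → ℝ) (hXm : ∀ i, Measurable (X i))
    (hX : samplesWithoutReplacement P N x X)
    (a b : ℝ) (ha : IsLeast (Set.range x) a) (hb : IsGreatest (Set.range x) b)
    (μ : ℝ) (hμ : μ = (∑ i, x i) / N)
    (ρ : ℝ)
    (hρ : ρ = if 2 * n ≤ N then 1 - ((n : ℝ) - 1) / N
              else (1 - (n : ℝ) / N) * (1 + 1 / (n : ℝ)))
    (δ : ℝ) (hδ0 : 0 < δ) (hδ1 : δ ≤ 1) :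
    ENNReal.ofReal (1 - δ) ≤
      P {ω | (∑ t ∈ Finset.range n, (X t ω - μ)) / (n : ℝ) ≤
          (b - a) * Real.sqrt (ρ * Real.log (1 / δ) / (2 * n))} :=
  hoeffding_serfling_corollary_general P N n hn1 hn x X hXm hX a b ha hb μ hμ ρ hρ δ hδ0 hδ1
end
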